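/- arXiv:2505.04581 — 6 statements merged into one kernel-verified Lean document; each statement's English description precedes it below -/
import Mathlib

section
/- Let k be any field and m, n ≥ 0 with m+n ≥ 1. Every double coset in B(k)\GL_{m+n}(k)/K(k) contains a binary matrix, i.e. an invertible matrix every entry of which is either 0 or 1. -/
/-- A square matrix is upper triangular: every entry below the diagonal vanishes. -/
def IsUpperTriangular {N : ℕ} {k : Type*} [Field k] (g : Matrix (Fin N) (Fin N) k) : Prop :=
  ∀ i j : Fin N, (j : ℕ) < (i : ℕ) → g i j = 0

/-- A square matrix is block diagonal of type `(m, N - m)`: the entry at `(i,j)` vanishes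
whenever exactly one of `i`, `j` lies in the first `m` indices. -/
def IsBlockDiag (m : ℕ) {N : ℕ} {k : Type*} [Field k] (g : Matrix (Fin N) (Fin N) k) : Prop :=
  ∀ i j : Fin N, ¬(((i : ℕ) < m) ↔ ((j : ℕ) < m)) → g i j = 0

/-!
The double coset of `g` only depends on the subspaces `P` and `Q` spanned by the first `m` and
the last `n` columns of `g`, on which `b ∈ B(k)` acts. If `b P` and `b Q` are both spanned by
binary vectors, binary bases of them are the columns of a binary matrix `b g h` with `h ∈ K(k)`.

Such a `b` is built, for arbitrary subspaces `U` and `Z`, one coordinate at a time along the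
standard flag `E_M = supportedBelow k M`: knowing `b` on `E_M`, it is extended by the choice of
`b e_M`. If only `U` leaves `E_M`, through a pivot `u` with `u_M = 1`, then
`U = (U ⊓ E_M) ⊔ k u` and one takes `b u = e_M`. If both leave `E_M`, through pivots `u` and
`z`, one needs `b u = e_M + y` and `b z = e_M + y'` with `y`, `y'` binary, so `b (z - u)` must be a
difference of binary vectors, i.e. ternary, modulo `b (U ⊓ E_M) ⊔ b (Z ⊓ E_M)`. Hence the
induction carries a list of further vectors (`TernaryChain`), each of which must become ternary,
with coefficient `1`, modulo `U ⊔ Z` and the vectors before it.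
-/

namespace BinaryCoset

open Submodule

variable {k : Type*} [Field k]

section Vectors

variable {ι : Type*}

def IsBinary (x : ι → k) : Prop := ∀ i, x i = 0 ∨ x i = 1

def IsTernary (x : ι → k) : Prop := ∀ i, x i = 0 ∨ x i = 1 ∨ x i = -1

def IsBinarySpanned (S : Submodule k (ι → k)) : Prop :=
  S ≤ span k {x | x ∈ S ∧ IsBinary x}

lemma isBinary_zero : IsBinary (0 : ι → k) := fun _ => Or.inl rfl

lemma IsBinary.single_add [DecidableEq ι] {y : ι → k} (hy : IsBinary y) {i : ι}
    (hi : y i = 0) : IsBinary (Pi.single i 1 + y) := by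
  intro j
  rcases eq_or_ne j i with rfl | hj
  · simp [hi]
  · simpa [hj] using hy j

lemma isTernary_single [DecidableEq ι] (i : ι) : IsTernary (Pi.single i (1 : k)) := fun j => by
  rcases eq_or_ne j i with rfl | h
  · simp
  · simp [h]

lemma IsTernary.exists_isBinary_add {t : ι → k} (ht : IsTernary t) :
    ∃ y, IsBinary y ∧ IsBinary (y + t) ∧ ∀ i, t i = 0 → y i = 0 := by
  classical
  refine ⟨fun i => if t i = -1 then 1 else 0, fun i => ?_, fun i => ?_,
    fun i hi => by simp [hi]⟩
  · dsimp only
    split_ifs <;> simp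
  · by_cases h : t i = -1
    · simp [h]
    · simp only [Pi.add_apply, h, if_false, zero_add]
      exact (ht i).imp_right (Or.resolve_right · h)

lemma IsBinarySpanned.of_le_sup_span {S T : Submodule k (ι → k)} {β : ι → k}
    (hS : IsBinarySpanned S) (hST : S ≤ T) (hβ : IsBinary β) (hβT : β ∈ T)
    (hT : T ≤ S ⊔ span k {β}) : IsBinarySpanned T := by
  refine hT.trans (sup_le (hS.trans (span_mono fun x hx => ⟨hST hx.1, hx.2⟩)) ?_)
  rw [span_le, Set.singleton_subset_iff]
  exact subset_span ⟨hβT, hβ⟩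

lemma map_eq_of_eqOn {σ τ : (ι → k) →ₗ[k] ι → k} {E S : Submodule k (ι → k)}
    (h : ∀ x ∈ E, τ x = σ x) (hS : S ≤ E) : S.map τ = S.map σ :=
  SetLike.coe_injective <| by
    simp only [map_coe]
    exact Set.image_congr fun x hx => h x (hS hx)

def TernaryChain : Submodule k (ι → k) → List (ι → k) → Prop
  | _, [] => True
  | W, d :: D => (∃ t, IsTernary t ∧ d - t ∈ W) ∧ TernaryChain (W ⊔ span k {d}) D

lemma TernaryChain.mono {W W' : Submodule k (ι → k)} (hW : W ≤ W') :
    ∀ {D : List (ι → k)}, TernaryChain W D → TernaryChain W' D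
  | [], _ => trivial
  | _ :: _, ⟨⟨t, ht, hdt⟩, hD⟩ => ⟨⟨t, ht, hW hdt⟩, hD.mono (sup_le_sup_right hW _)⟩

lemma TernaryChain.of_forall_mem {W : Submodule k (ι → k)} :
    ∀ {D : List (ι → k)}, (∀ d ∈ D, d ∈ W) → TernaryChain W D
  | [], _ => trivial
  | d :: _, hD => ⟨⟨0, fun _ => Or.inl rfl, by simpa using hD d List.mem_cons_self⟩,
      of_forall_mem fun x hx => mem_sup_left (hD x (List.mem_cons_of_mem d hx))⟩

lemma TernaryChain.map_of_sub_mem {α : Type*} {f g : α → ι → k} :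
    ∀ {W : Submodule k (ι → k)} {D : List α}, TernaryChain W (D.map f) →
      (∀ d ∈ D, g d - f d ∈ W) → TernaryChain W (D.map g)
  | _, [], _, _ => trivial
  | W, d :: D, ⟨⟨t, ht, hdt⟩, hD⟩, hfg => by
    have hd := hfg d List.mem_cons_self
    refine ⟨⟨t, ht, by simpa using W.add_mem hd hdt⟩, ?_⟩
    have hle : W ⊔ span k {f d} ≤ W ⊔ span k {g d} := by
      refine sup_le le_sup_left ?_
      rw [span_le, Set.singleton_subset_iff]
      simpa using (W ⊔ span k {g d}).sub_mem (mem_sup_right (mem_span_singleton_self (g d)))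
        (mem_sup_left hd)
    exact (hD.mono hle).map_of_sub_mem fun x hx =>
      mem_sup_left (hfg x (List.mem_cons_of_mem d hx))

lemma ternaryChain_append {W : Submodule k (ι → k)} {L R : List (ι → k)} :
    TernaryChain W (L ++ R) ↔
      TernaryChain W L ∧ TernaryChain (W ⊔ span k {x | x ∈ L}) R := by
  induction L generalizing W with
  | nil => simp [TernaryChain]
  | cons d L ih =>
    have hset : {x | x ∈ d :: L} = insert d {x | x ∈ L} := by ext; simp
    simp only [List.cons_append, TernaryChain, ih, and_assoc, hset, span_insert, sup_assoc]

def pivotReduce (i : ι) (u x : ι → k) : ι → k := x - (x i / u i) • u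

lemma TernaryChain.of_map_pivotReduce {W : Submodule k (ι → k)} {i : ι} {u : ι → k}
    {τ : (ι → k) →ₗ[k] ι → k} (hu : τ u ∈ W) {D : List (ι → k)}
    (h : TernaryChain W ((D.map (pivotReduce i u)).map τ)) : TernaryChain W (D.map τ) := by
  rw [List.map_map] at h
  exact h.map_of_sub_mem fun d _ => by simpa [pivotReduce] using smul_mem _ _ hu

end Vectors

section Flag

variable {N : ℕ}

variable (k) in
def supportedBelow (M : ℕ) : Submodule k (Fin N → k) where
  carrier := {x | ∀ j : Fin N, M ≤ j → x j = 0}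
  add_mem' hx hy j hj := by simp [hx j hj, hy j hj]
  zero_mem' _ _ := rfl
  smul_mem' c x hx j hj := by simp [hx j hj]

lemma supportedBelow_mono {M M' : ℕ} (h : M ≤ M') :
    supportedBelow k M ≤ (supportedBelow k M' : Submodule k (Fin N → k)) :=
  fun _ hx j hj => hx j (h.trans hj)

lemma supportedBelow_zero : supportedBelow k 0 = (⊥ : Submodule k (Fin N → k)) :=
  eq_bot_iff.2 fun _ hx => funext fun j => hx j j.val.zero_le

lemma single_mem_supportedBelow {M : ℕ} {j : Fin N} (h : (j : ℕ) < M) :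
    Pi.single j 1 ∈ supportedBelow k M := fun i hi =>
  Pi.single_eq_of_ne (fun hij => by subst hij; omega) 1

lemma apply_eq_zero_of_mem_supportedBelow {i : Fin N} {x : Fin N → k}
    (hx : x ∈ supportedBelow k i) : x i = 0 :=
  hx i le_rfl

lemma mem_supportedBelow_of_apply_eq_zero {i : Fin N} {x : Fin N → k}
    (hx : x ∈ supportedBelow k (i + 1)) (hxi : x i = 0) : x ∈ supportedBelow k i := by
  intro j hj
  rcases hj.eq_or_lt with hij | hij
  · rwa [Fin.ext hij] at hxi
  · exact hx j hij

lemma pivotReduce_mem {i : Fin N} {u x : Fin N → k} (hx : x ∈ supportedBelow k (i + 1))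
    (hu : u ∈ supportedBelow k (i + 1)) (hui : u i ≠ 0) :
    pivotReduce i u x ∈ supportedBelow k i :=
  mem_supportedBelow_of_apply_eq_zero (sub_mem hx (smul_mem _ _ hu)) (by simp [pivotReduce, hui])

lemma forall_mem_map_pivotReduce {i : Fin N} {u : Fin N → k}
    (hu : u ∈ supportedBelow k (i + 1)) (hui : u i ≠ 0) {D : List (Fin N → k)}
    (hD : ∀ d ∈ D, d ∈ supportedBelow k (i + 1)) :
    ∀ x ∈ D.map (pivotReduce i u), x ∈ supportedBelow k i :=
  List.forall_mem_map.2 fun d hd => pivotReduce_mem (hD d hd) hu hui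

lemma le_inf_sup_span_of_apply_ne_zero {i : Fin N} {U : Submodule k (Fin N → k)}
    (hU : U ≤ supportedBelow k (i + 1)) {u : Fin N → k} (hu : u ∈ U) (hui : u i ≠ 0) :
    U ≤ U ⊓ supportedBelow k i ⊔ span k {u} := fun x hx => by
  rw [← sub_add_cancel x ((x i / u i) • u)]
  exact add_mem
    (mem_sup_left ⟨sub_mem hx (smul_mem _ _ hu), pivotReduce_mem (hU hx) (hU hu) hui⟩)
    (mem_sup_right (smul_mem _ _ (mem_span_singleton_self u)))

lemma exists_mem_apply_eq_one {i : Fin N} {U : Submodule k (Fin N → k)}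
    (hU : U ≤ supportedBelow k (i + 1)) (hUi : ¬U ≤ supportedBelow k i) :
    ∃ u ∈ U, u i = 1 := by
  obtain ⟨v, hvU, hv⟩ := SetLike.not_le_iff_exists.1 hUi
  have hvi : v i ≠ 0 := fun h => hv (mem_supportedBelow_of_apply_eq_zero (hU hvU) h)
  exact ⟨(v i)⁻¹ • v, smul_mem _ _ hvU, by simp [hvi]⟩

lemma isBinarySpanned_map_of_pivot {i : Fin N} {U : Submodule k (Fin N → k)}
    (hU : U ≤ supportedBelow k (i + 1)) {u : Fin N → k} (hu : u ∈ U) (hui : u i ≠ 0)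
    {τ : (Fin N → k) →ₗ[k] Fin N → k}
    (hS : IsBinarySpanned ((U ⊓ supportedBelow k i).map τ)) (hτu : IsBinary (τ u)) :
    IsBinarySpanned (U.map τ) := by
  refine hS.of_le_sup_span (map_mono inf_le_left) hτu (mem_map_of_mem hu) ?_
  simpa [Submodule.map_sup, map_span] using
    map_mono (f := τ) (le_inf_sup_span_of_apply_ne_zero hU hu hui)

/-- Preserving the flag `supportedBelow k M'` for all `M'` means being upper triangular. -/
def TriangularBelow (M : ℕ) (σ : (Fin N → k) ≃ₗ[k] (Fin N → k)) : Prop :=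
  (∀ M' : ℕ, ∀ x ∈ supportedBelow k M', σ x ∈ supportedBelow k M') ∧
    ∀ j : Fin N, M ≤ j → σ (Pi.single j 1) = Pi.single j 1

lemma triangularBelow_refl (M : ℕ) : TriangularBelow M (LinearEquiv.refl k (Fin N → k)) :=
  ⟨fun _ _ hx => hx, fun _ _ => rfl⟩

lemma TriangularBelow.mono {M M' : ℕ} {σ : (Fin N → k) ≃ₗ[k] (Fin N → k)}
    (hσ : TriangularBelow M σ) (h : M ≤ M') : TriangularBelow M' σ :=
  ⟨hσ.1, fun j hj => hσ.2 j (h.trans hj)⟩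

lemma TriangularBelow.apply_single_eq_zero {M : ℕ} {σ : (Fin N → k) ≃ₗ[k] (Fin N → k)}
    (hσ : TriangularBelow M σ) {i j : Fin N} (hji : j < i) : σ (Pi.single j 1) i = 0 :=
  hσ.1 (j + 1) _ (single_mem_supportedBelow (Nat.lt_succ_self j)) i hji

end Flag

section Extension

def shear {ι : Type*} (i : ι) (a : ι → k) : (ι → k) →ₗ[k] ι → k :=
  LinearMap.id + (LinearMap.proj i).smulRight a

lemma shear_apply {ι : Type*} (i : ι) (a x : ι → k) : shear i a x = x + x i • a := rfl

lemma shear_injective {ι : Type*} {i : ι} {a : ι → k} (ha : 1 + a i ≠ 0) :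
    Function.Injective (shear i a) := by
  rw [← LinearMap.ker_eq_bot, LinearMap.ker_eq_bot']
  intro x hx
  have hxi : x i = 0 := by
    have := congr_fun hx i
    simp only [shear_apply, Pi.add_apply, Pi.smul_apply, smul_eq_mul, Pi.zero_apply] at this
    exact (mul_eq_zero.1 (by linear_combination this)).resolve_right ha
  simpa [shear_apply, hxi] using hx

variable {N : ℕ}

lemma TriangularBelow.exists_extend {i : Fin N} {σ : (Fin N → k) ≃ₗ[k] (Fin N → k)}
    (hσ : TriangularBelow i σ) {u y : Fin N → k} (hu : u ∈ supportedBelow k (i + 1))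
    (hui : u i ≠ 0) (hy : y ∈ supportedBelow k i) :
    ∃ τ : (Fin N → k) ≃ₗ[k] (Fin N → k), TriangularBelow (i + 1) τ ∧
      (∀ x ∈ supportedBelow k i, τ x = σ x) ∧ τ u = Pi.single i 1 + y := by
  set c := u i
  set e : Fin N → k := Pi.single i 1
  have he : e ∈ supportedBelow k (i + 1) := single_mem_supportedBelow (Nat.lt_succ_self i)
  set s := σ (u - c • e)
  have hs : s ∈ supportedBelow k i :=
    hσ.1 _ _ (mem_supportedBelow_of_apply_eq_zero (sub_mem hu (smul_mem _ _ he)) (by simp [c, e]))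
  have hσu : σ u = s + c • e := by simp [s, hσ.2 i le_rfl, e]
  -- `τ` is `σ` followed by the shear `x ↦ x + x i • a`, which fixes `supportedBelow k i` and,
  -- as `a ∈ supportedBelow k (i + 1)`, preserves the flag.
  set a := c⁻¹ • ((1 - c) • e + y - s)
  have ha : a ∈ supportedBelow k (i + 1) :=
    smul_mem _ _ (sub_mem (add_mem (smul_mem _ _ he) (supportedBelow_mono (Nat.le_succ _) hy))
      (supportedBelow_mono (Nat.le_succ _) hs))
  have hai : 1 + a i = c⁻¹ := by
    simp [a, e, apply_eq_zero_of_mem_supportedBelow hy, apply_eq_zero_of_mem_supportedBelow hs]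
    field_simp
    ring
  set τ := σ.trans
    (LinearEquiv.ofInjectiveEndo (shear i a) (shear_injective (hai ▸ inv_ne_zero hui)))
  have hτ : ∀ x, τ x = σ x + σ x i • a := fun _ => rfl
  have hτ_fix : ∀ x, σ x i = 0 → τ x = σ x := fun x hx => by simp [hτ, hx]
  refine ⟨τ, ⟨fun M' x hx => ?_, fun j hj => ?_⟩, fun x hx => hτ_fix x
    (apply_eq_zero_of_mem_supportedBelow (hσ.1 _ x hx)), ?_⟩
  · rcases le_or_gt M' i with h | h
    · rw [hτ_fix x (hσ.1 M' x hx i h)]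
      exact hσ.1 M' x hx
    · exact add_mem (hσ.1 M' x hx) (smul_mem _ _ (supportedBelow_mono h ha))
  · have hj' : σ (Pi.single j 1) = Pi.single j 1 := hσ.2 j (by omega)
    rw [hτ_fix _ (by rw [hj']; exact Pi.single_eq_of_ne (by rintro rfl; omega) 1), hj']
  · have hσui : σ u i = c := by
      simp [hσu, e, apply_eq_zero_of_mem_supportedBelow hs]
    rw [hτ, hσui, hσu]
    simp only [a, smul_smul, mul_inv_cancel₀ hui, one_smul]
    module

end Extension

section Reduction

variable {N : ℕ}

def Solvable (M : ℕ) (U Z : Submodule k (Fin N → k)) (D : List (Fin N → k)) : Prop :=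
  ∃ σ : (Fin N → k) ≃ₗ[k] (Fin N → k), TriangularBelow M σ ∧
    IsBinarySpanned (U.map σ.toLinearMap) ∧ IsBinarySpanned (Z.map σ.toLinearMap) ∧
    TernaryChain ((U ⊔ Z).map σ.toLinearMap) (D.map σ)

variable {U Z : Submodule k (Fin N → k)} {D : List (Fin N → k)}

lemma Solvable.symm {M : ℕ} (h : Solvable M U Z D) : Solvable M Z U D := by
  obtain ⟨σ, hσ, hU, hZ, hD⟩ := h
  exact ⟨σ, hσ, hZ, hU, sup_comm U Z ▸ hD⟩

lemma Solvable.mono {M M' : ℕ} (h : Solvable M U Z D) (hM : M ≤ M') : Solvable M' U Z D := by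
  obtain ⟨σ, hσ, hU, hZ, hD⟩ := h
  exact ⟨σ, hσ.mono hM, hU, hZ, hD⟩

lemma solvable_zero (hU : U ≤ supportedBelow k 0) (hZ : Z ≤ supportedBelow k 0)
    (hD : ∀ d ∈ D, d ∈ supportedBelow k 0) : Solvable 0 U Z D := by
  rw [supportedBelow_zero, le_bot_iff] at hU hZ
  subst hU hZ
  refine ⟨LinearEquiv.refl k _, triangularBelow_refl 0, by simp [IsBinarySpanned],
    by simp [IsBinarySpanned], .of_forall_mem fun x hx => ?_⟩
  obtain ⟨d, hd, rfl⟩ := List.mem_map.1 hx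
  simp [(mem_bot k).1 (supportedBelow_zero (k := k) ▸ hD d hd)]

lemma Solvable.succ_of_chain_pivot {i : Fin N} (hU : U ≤ supportedBelow k i)
    (hZ : Z ≤ supportedBelow k i) {L R : List (Fin N → k)}
    (hL : ∀ x ∈ L, x ∈ supportedBelow k i) {d : Fin N → k}
    (hd : d ∈ supportedBelow k (i + 1)) (hdi : d i ≠ 0)
    (hR : ∀ x ∈ R, x ∈ supportedBelow k (i + 1))
    (h : Solvable i U Z (L ++ R.map (pivotReduce i d))) :
    Solvable (i + 1) U Z (L ++ d :: R) := by
  obtain ⟨σ, hσ, hBU, hBZ, hC⟩ := h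
  obtain ⟨τ, hτ, hτσ, hτd⟩ := hσ.exists_extend hd hdi (zero_mem _)
  have hmap : ∀ S ≤ supportedBelow k i, S.map τ.toLinearMap = S.map σ.toLinearMap :=
    fun S hS => map_eq_of_eqOn hτσ hS
  refine ⟨τ, hτ, (hmap U hU).symm ▸ hBU, (hmap Z hZ).symm ▸ hBZ, ?_⟩
  rw [← hmap _ (sup_le hU hZ), ← List.map_congr_left fun x hx => hτσ x <|
    List.forall_mem_append.2 ⟨hL, forall_mem_map_pivotReduce hd hdi hR⟩ x hx] at hC
  rw [List.map_append, ternaryChain_append] at hC ⊢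
  refine ⟨hC.1, ⟨Pi.single i 1, isTernary_single i, by simp [hτd]⟩, ?_⟩
  exact (hC.2.mono le_sup_left).of_map_pivotReduce (mem_sup_right (mem_span_singleton_self _))

lemma Solvable.succ_of_le {i : Fin N} (hU : U ≤ supportedBelow k i)
    (hZ : Z ≤ supportedBelow k i) (hD : ∀ d ∈ D, d ∈ supportedBelow k (i + 1))
    (ih : ∀ D' : List (Fin N → k), (∀ d ∈ D', d ∈ supportedBelow k i) →
      Solvable i U Z D') :
    Solvable (i + 1) U Z D := by
  classical
  cases hfind : D.find? (fun d => d i ≠ 0) with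
  | none =>
    refine (ih D fun d hd => mem_supportedBelow_of_apply_eq_zero (hD d hd) ?_).mono
      (Nat.le_succ _)
    simpa using List.find?_eq_none.1 hfind d hd
  | some d =>
    obtain ⟨hdi, L, R, rfl, hL⟩ := List.find?_eq_some_iff_append.1 hfind
    have hdi : d i ≠ 0 := by simpa using hdi
    have hL : ∀ x ∈ L, x ∈ supportedBelow k i := fun x hx =>
      mem_supportedBelow_of_apply_eq_zero (hD x (by simp [hx])) (by simpa using hL x hx)
    have hR : ∀ x ∈ R, x ∈ supportedBelow k (i + 1) := fun x hx => hD x (by simp [hx])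
    have hd := hD d (by simp)
    exact succ_of_chain_pivot hU hZ hL hd hdi hR <|
      ih _ <| List.forall_mem_append.2 ⟨hL, forall_mem_map_pivotReduce hd hdi hR⟩

lemma Solvable.succ_of_pivot {i : Fin N} (hU : U ≤ supportedBelow k (i + 1))
    (hZ : Z ≤ supportedBelow k i) (hD : ∀ d ∈ D, d ∈ supportedBelow k (i + 1))
    {u : Fin N → k} (hu : u ∈ U) (hui : u i ≠ 0)
    (h : Solvable i (U ⊓ supportedBelow k i) Z (D.map (pivotReduce i u))) :
    Solvable (i + 1) U Z D := by
  obtain ⟨σ, hσ, hBU, hBZ, hC⟩ := h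
  obtain ⟨τ, hτ, hτσ, hτu⟩ := hσ.exists_extend (hU hu) hui (zero_mem _)
  have hmap : ∀ S ≤ supportedBelow k i, S.map τ.toLinearMap = S.map σ.toLinearMap :=
    fun S hS => map_eq_of_eqOn hτσ hS
  refine ⟨τ, hτ, isBinarySpanned_map_of_pivot hU hu hui ((hmap _ inf_le_right).symm ▸ hBU)
    (hτu ▸ isBinary_zero.single_add rfl), (hmap Z hZ).symm ▸ hBZ, ?_⟩
  rw [← hmap _ (sup_le inf_le_right hZ), ← List.map_congr_left fun x hx =>
    hτσ x (forall_mem_map_pivotReduce (hU hu) hui hD x hx)] at hC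
  exact (hC.mono (map_mono (sup_le_sup_right inf_le_left Z))).of_map_pivotReduce
    (mem_map_of_mem (mem_sup_left hu))

lemma exists_pivots_sub_eq {i : Fin N} {σ : (Fin N → k) ≃ₗ[k] (Fin N → k)}
    {u z t : Fin N → k} (hu : u ∈ U) (hz : z ∈ Z) (hui : u i = 1) (hzi : z i = 1)
    (ht : σ (z - u) - t ∈
      (U ⊓ supportedBelow k i ⊔ Z ⊓ supportedBelow k i).map σ.toLinearMap) :
    ∃ u' ∈ U, ∃ z' ∈ Z, u' i = 1 ∧ z' i = 1 ∧ σ (z' - u') = t := by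
  obtain ⟨w, hw, hσw⟩ := mem_map.1 ht
  obtain ⟨a, ha, c, hc, rfl⟩ := mem_sup.1 hw
  refine ⟨u + a, add_mem hu ha.1, z - c, sub_mem hz hc.1,
    by simp [hui, apply_eq_zero_of_mem_supportedBelow ha.2],
    by simp [hzi, apply_eq_zero_of_mem_supportedBelow hc.2], ?_⟩
  have : z - c - (u + a) = (z - u) - (a + c) := by abel
  rw [this, map_sub, show σ (a + c) = _ from hσw, sub_sub_cancel]

lemma Solvable.succ_of_two_pivots {i : Fin N} (hU : U ≤ supportedBelow k (i + 1))
    (hZ : Z ≤ supportedBelow k (i + 1)) (hD : ∀ d ∈ D, d ∈ supportedBelow k (i + 1))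
    {u z : Fin N → k} (hu : u ∈ U) (hz : z ∈ Z) (hui : u i = 1) (hzi : z i = 1)
    (h : Solvable i (U ⊓ supportedBelow k i) (Z ⊓ supportedBelow k i)
      ((z - u) :: D.map (pivotReduce i u))) :
    Solvable (i + 1) U Z D := by
  obtain ⟨σ, hσ, hBU, hBZ, ⟨t, ht, hzut⟩, hC⟩ := h
  obtain ⟨u', hu', z', hz', hu'i, hz'i, hσz'u'⟩ := exists_pivots_sub_eq hu hz hui hzi hzut
  have hz'u' : z' - u' ∈ supportedBelow k i :=
    mem_supportedBelow_of_apply_eq_zero (sub_mem (hZ hz') (hU hu')) (by simp [hz'i, hu'i])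
  have ht0 : t ∈ supportedBelow k i := hσz'u' ▸ hσ.1 _ _ hz'u'
  obtain ⟨y, hy, hyt, hy0⟩ := ht.exists_isBinary_add
  have hyE : y ∈ supportedBelow k i := fun j hj => hy0 j (ht0 j hj)
  obtain ⟨τ, hτ, hτσ, hτu'⟩ := hσ.exists_extend (hU hu') (by simp [hu'i]) hyE
  have hτz' : τ z' = Pi.single i 1 + (y + t) := by
    rw [← sub_add_cancel z' u', map_add, hτσ _ hz'u', hσz'u', hτu']
    abel
  have hmap : ∀ S ≤ supportedBelow k i, S.map τ.toLinearMap = S.map σ.toLinearMap :=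
    fun S hS => map_eq_of_eqOn hτσ hS
  refine ⟨τ, hτ, isBinarySpanned_map_of_pivot hU hu' (by simp [hu'i])
      ((hmap _ inf_le_right).symm ▸ hBU)
      (hτu' ▸ hy.single_add (apply_eq_zero_of_mem_supportedBelow hyE)),
    isBinarySpanned_map_of_pivot hZ hz' (by simp [hz'i]) ((hmap _ inf_le_right).symm ▸ hBZ)
      (hτz' ▸ hyt.single_add (by simp [apply_eq_zero_of_mem_supportedBelow hyE,
        apply_eq_zero_of_mem_supportedBelow ht0])), ?_⟩
  have hzu : z - u ∈ supportedBelow k i :=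
    mem_supportedBelow_of_apply_eq_zero (sub_mem (hZ hz) (hU hu)) (by simp [hzi, hui])
  rw [← hmap _ (sup_le inf_le_right inf_le_right), ← hτσ _ hzu, ← List.map_congr_left
    fun x hx => hτσ x (forall_mem_map_pivotReduce (hU hu) (by simp [hui]) hD x hx)] at hC
  refine (hC.mono (sup_le (map_mono (sup_le_sup inf_le_left inf_le_left)) ?_)).of_map_pivotReduce
    (mem_map_of_mem (mem_sup_left hu))
  rw [span_le, Set.singleton_subset_iff]
  exact mem_map_of_mem (sub_mem (mem_sup_right hz) (mem_sup_left hu))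

theorem solvable_of_le_supportedBelow (M : ℕ) (hM : M ≤ N) (U Z : Submodule k (Fin N → k))
    (hU : U ≤ supportedBelow k M) (hZ : Z ≤ supportedBelow k M) (D : List (Fin N → k))
    (hD : ∀ d ∈ D, d ∈ supportedBelow k M) : Solvable M U Z D := by
  induction M generalizing U Z D with
  | zero => exact solvable_zero hU hZ hD
  | succ M ih =>
    let i : Fin N := ⟨M, hM⟩
    replace ih := ih (Nat.le_of_succ_le hM)
    by_cases hUi : U ≤ supportedBelow k i <;> by_cases hZi : Z ≤ supportedBelow k i
    · exact Solvable.succ_of_le hUi hZi hD (ih U Z hUi hZi)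
    · obtain ⟨z, hz, hzi⟩ := exists_mem_apply_eq_one hZ hZi
      have hzi : z i ≠ 0 := by simp [hzi]
      exact (Solvable.succ_of_pivot hZ hUi hD hz hzi <| ih _ _ inf_le_right hUi _ <|
        forall_mem_map_pivotReduce (hZ hz) hzi hD).symm
    · obtain ⟨u, hu, hui⟩ := exists_mem_apply_eq_one hU hUi
      have hui : u i ≠ 0 := by simp [hui]
      exact Solvable.succ_of_pivot hU hZi hD hu hui <| ih _ _ inf_le_right hZi _ <|
        forall_mem_map_pivotReduce (hU hu) hui hD
    · obtain ⟨u, hu, hui⟩ := exists_mem_apply_eq_one hU hUi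
      obtain ⟨z, hz, hzi⟩ := exists_mem_apply_eq_one hZ hZi
      refine Solvable.succ_of_two_pivots hU hZ hD hu hz hui hzi <|
        ih _ _ inf_le_right inf_le_right _ <| List.forall_mem_cons.2 ⟨?_,
          forall_mem_map_pivotReduce (hU hu) (by simp [hui]) hD⟩
      exact mem_supportedBelow_of_apply_eq_zero (i := i) (sub_mem (hZ hz) (hU hu))
        (by simp [hui, hzi])

theorem exists_upperTriangular_isBinarySpanned (U Z : Submodule k (Fin N → k)) :
    ∃ σ : (Fin N → k) ≃ₗ[k] (Fin N → k),
      (∀ i j : Fin N, j < i → σ (Pi.single j 1) i = 0) ∧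
      IsBinarySpanned (U.map σ.toLinearMap) ∧ IsBinarySpanned (Z.map σ.toLinearMap) := by
  have htop : ∀ S : Submodule k (Fin N → k), S ≤ supportedBelow k N :=
    fun _ _ _ j hj => absurd j.2 (not_lt.2 hj)
  obtain ⟨σ, hσ, hU, hZ, -⟩ :=
    solvable_of_le_supportedBelow N le_rfl U Z (htop U) (htop Z) [] (by simp)
  exact ⟨σ, fun _ _ => hσ.apply_single_eq_zero, hU, hZ⟩

end Reduction

section Assembly

variable {ι κ : Type*}

lemma IsBinarySpanned.exists_basis {S : Submodule k (ι → k)} (hS : IsBinarySpanned S) :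
    ∃ (t : Set (ι → k)) (b : Module.Basis t k S), ∀ j, IsBinary (b j : ι → k) := by
  obtain ⟨t, hts, hspan, hli⟩ := exists_linearIndependent k {x | x ∈ S ∧ IsBinary x}
  have ht : span k (Set.range ((↑) : t → ι → k)) = S := by
    rw [Subtype.range_coe, hspan]
    exact le_antisymm (span_le.2 fun x hx => hx.1) hS
  refine ⟨t, (Module.Basis.span hli).map (LinearEquiv.ofEq _ _ ht), fun j => ?_⟩
  simpa [Module.Basis.span_apply] using (hts j.2).2

lemma exists_isBinary_basis_adapted (v : Module.Basis κ k (ι → k)) (s : Set κ)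
    (hs : IsBinarySpanned (span k (v '' s))) (hsc : IsBinarySpanned (span k (v '' sᶜ))) :
    ∃ f : Module.Basis κ k (ι → k), (∀ j, IsBinary (f j)) ∧
      (∀ j ∈ s, f j ∈ span k (v '' s)) ∧ ∀ j ∉ s, f j ∈ span k (v '' sᶜ) := by
  classical
  obtain ⟨tP, bP, hbP⟩ := hs.exists_basis
  obtain ⟨tQ, bQ, hbQ⟩ := hsc.exists_basis
  have hrange (r : Set κ) : span k (Set.range (v ∘ ((↑) : r → κ))) = span k (v '' r) := by
    rw [Set.range_comp, Subtype.range_coe]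
  let basisOn (r : Set κ) : Module.Basis r k (span k (v '' r)) :=
    (Module.Basis.span (v.linearIndependent.comp _ Subtype.val_injective)).map
      (LinearEquiv.ofEq _ _ (hrange r))
  let e : κ ≃ tP ⊕ tQ := (Equiv.Set.sumCompl s).symm.trans
    (((basisOn s).indexEquiv bP).sumCongr ((basisOn sᶜ).indexEquiv bQ))
  let B := (bP.prod bQ).map (prodEquivOfIsCompl _ _
    (v.linearIndependent.isCompl_span_image v.span_eq isCompl_compl))
  have hB : ∀ j, B j = Sum.elim (fun a => (bP a : ι → k)) (fun b => (bQ b : ι → k)) j := by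
    rintro (a | b) <;> simp [B, Module.Basis.prod_apply]
  refine ⟨B.reindex e.symm, fun j => ?_, fun j hj => ?_, fun j hj => ?_⟩
  · rw [Module.Basis.reindex_apply, hB, Equiv.symm_symm]
    rcases e j with a | b
    · exact hbP a
    · exact hbQ b
  · simp [Module.Basis.reindex_apply, hB, e, Equiv.Set.sumCompl_symm_apply_of_mem hj]
  · simp [Module.Basis.reindex_apply, hB, e, Equiv.Set.sumCompl_symm_apply_of_notMem hj]

lemma apply_symm_eq_zero_of_mem_span_image [Finite ι] {ψ : (ι → k) ≃ₗ[k] (ι → k)}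
    {s : Set ι} {x : ι → k} (hx : x ∈ span k ((Pi.basisFun k ι).map ψ '' s)) {i : ι}
    (hi : i ∉ s) : ψ.symm x i = 0 := by
  rw [Module.Basis.mem_span_image] at hx
  by_contra h
  exact hi (hx (by simpa [Module.Basis.map_repr] using h))

end Assembly

variable {N : ℕ}

noncomputable def glEquiv : GL (Fin N) k ≃* ((Fin N → k) ≃ₗ[k] (Fin N → k)) :=
  Matrix.GeneralLinearGroup.toLin.trans (LinearMap.GeneralLinearGroup.generalLinearEquiv k _)

lemma glEquiv_apply_single (A : GL (Fin N) k) (i j : Fin N) :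
    glEquiv A (Pi.single j 1) i = (A : Matrix (Fin N) (Fin N) k) i j :=
  congr_fun (Matrix.mulVec_single_one _ j) i

end BinaryCoset

open BinaryCoset Submodule in
theorem double_coset_contains_binary_matrix_general (k : Type*) [Field k] (m n : ℕ)
    (g : GL (Fin (m + n)) k) :
    ∃ b h : GL (Fin (m + n)) k,
      IsUpperTriangular (b : Matrix (Fin (m + n)) (Fin (m + n)) k) ∧
      IsBlockDiag m (h : Matrix (Fin (m + n)) (Fin (m + n)) k) ∧
      ∀ i j : Fin (m + n),
        ((b * g * h : GL (Fin (m + n)) k) : Matrix (Fin (m + n)) (Fin (m + n)) k) i j = 0 ∨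
        ((b * g * h : GL (Fin (m + n)) k) : Matrix (Fin (m + n)) (Fin (m + n)) k) i j = 1 := by
  let s : Set (Fin (m + n)) := {j | (j : ℕ) < m}
  let std := Pi.basisFun k (Fin (m + n))
  obtain ⟨σ, hσ, hP, hQ⟩ := exists_upperTriangular_isBinarySpanned
    (span k (std.map (glEquiv g) '' s)) (span k (std.map (glEquiv g) '' sᶜ))
  let ψ := (glEquiv g).trans σ
  have hmap (r : Set (Fin (m + n))) :
      (span k (std.map (glEquiv g) '' r)).map σ.toLinearMap = span k (std.map ψ '' r) := by
    rw [map_span, Set.image_image]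
    rfl
  obtain ⟨f, hfbin, hfs, hfsc⟩ :=
    exists_isBinary_basis_adapted (std.map ψ) s (hmap s ▸ hP) (hmap sᶜ ▸ hQ)
  let ξ := std.equiv f (Equiv.refl _)
  have hξ (j : Fin (m + n)) : ξ (Pi.single j 1) = f j := by
    rw [← Pi.basisFun_apply]
    exact std.equiv_apply j f (Equiv.refl _)
  refine ⟨glEquiv.symm σ, (glEquiv.symm σ * g)⁻¹ * glEquiv.symm ξ, fun i j hji => ?_,
    fun i j hij => ?_, fun i j => ?_⟩
  · rw [← glEquiv_apply_single, MulEquiv.apply_symm_apply]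
    exact hσ i j hji
  · rw [← glEquiv_apply_single, map_mul, map_inv, map_mul, MulEquiv.apply_symm_apply,
      MulEquiv.apply_symm_apply]
    change ψ.symm (ξ (Pi.single j 1)) i = 0
    rw [hξ]
    by_cases hj : j ∈ s
    · exact apply_symm_eq_zero_of_mem_span_image (hfs j hj) fun hi => hij (iff_of_true hi hj)
    · exact apply_symm_eq_zero_of_mem_span_image (hfsc j hj) fun hi => hij (iff_of_false hi hj)
  · rw [mul_inv_cancel_left, ← glEquiv_apply_single, MulEquiv.apply_symm_apply, hξ]
    exact hfbin j i

/-- For any field `k` and `m, n ≥ 0` with `m + n ≥ 1`, every double coset in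
`B(k)\GL_{m+n}(k)/K(k)` contains a binary matrix, i.e. an invertible matrix every entry of
which is `0` or `1`. Here `B(k)` is the group of invertible upper triangular matrices and
`K(k)` is the block diagonal subgroup `GL_m × GL_n`. -/
theorem double_coset_contains_binary_matrix (k : Type*) [Field k] (m n : ℕ)
    (hmn : 1 ≤ m + n) (g : GL (Fin (m + n)) k) :
    ∃ b h : GL (Fin (m + n)) k,
      IsUpperTriangular (b : Matrix (Fin (m + n)) (Fin (m + n)) k) ∧
      IsBlockDiag m (h : Matrix (Fin (m + n)) (Fin (m + n)) k) ∧
      ∀ i j : Fin (m + n),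
        ((b * g * h : GL (Fin (m + n)) k) : Matrix (Fin (m + n)) (Fin (m + n)) k) i j = 0 ∨
        ((b * g * h : GL (Fin (m + n)) k) : Matrix (Fin (m + n)) (Fin (m + n)) k) i j = 1 :=
  double_coset_contains_binary_matrix_general k m n g
end

section
/- For all integers p ≥ 2 and m ≥ 1, the numbers a_{p,m} satisfy the recurrence a_{p,m} = a_{p−1,m−1} + a_{p−1,m} + (p−1)·a_{p−2,m−1}, where by convention a_{p,0} = 1 for all p ≥ 0 and a_{p,m} = 0 when m < 0 or when the corona graph C_p has no m-matching. -/
open Sum Matrix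

/-- The corona graph `C_p` on vertices `v_1,…,v_p` (the `inl`s) and `w_1,…,w_p` (the `inr`s):
the `v_i` form a complete graph (internal edges) and each `v_i` is joined
to `w_i` (pendant edges). -/
def corona (p : ℕ) : SimpleGraph (Fin p ⊕ Fin p) where
  Adj x y :=
    (∃ i j : Fin p, i ≠ j ∧ x = inl i ∧ y = inl j) ∨
    (∃ i : Fin p, x = inl i ∧ y = inr i) ∨
    (∃ i : Fin p, x = inr i ∧ y = inl i)
  symm := by
    constructor
    rintro x y (⟨i, j, hij, rfl, rfl⟩ | ⟨i, rfl, rfl⟩ | ⟨i, rfl, rfl⟩)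
    · exact Or.inl ⟨j, i, hij.symm, rfl, rfl⟩
    · exact Or.inr (Or.inr ⟨i, rfl, rfl⟩)
    · exact Or.inr (Or.inl ⟨i, rfl, rfl⟩)
  loopless := by
    constructor
    rintro x (⟨i, j, hij, rfl, h⟩ | ⟨i, rfl, h⟩ | ⟨i, rfl, h⟩)
    · exact hij (by simpa using h)
    · simp at h
    · simp at h

/-- `s` is an `m`-matching of the graph `G`: a set of `m` edges of `G`,
no two of which share a vertex. -/
def IsNMatching {V : Type*} (G : SimpleGraph V) (m : ℕ) (s : Finset (Sym2 V)) : Prop :=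
  s.card = m ∧ (∀ e ∈ s, e ∈ G.edgeSet) ∧
    ∀ e ∈ s, ∀ f ∈ s, e ≠ f → ∀ v : V, v ∈ e → v ∉ f

/-- `a_{p,m}`: the number of `m`-matchings in the corona graph `C_p`.
(For `m = 0` this is `1` — the empty matching — and it is `0` whenever `C_p`
has no `m`-matching.) -/
noncomputable def aNum (p m : ℕ) : ℕ :=
  Nat.card {s : Finset (Sym2 (Fin p ⊕ Fin p)) // IsNMatching (corona p) m s}

/-!
Classify the `m`-matchings of `C_p` by what they do at `v_p`. If `v_p` is unmatched, so is
`w_p`, and what remains is an `m`-matching of `C_{p-1}`. If `v_p w_p` is used, removing it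
leaves an `(m-1)`-matching of `C_{p-1}`. If `v_p v_j` is used for one of the `p - 1` indices
`j < p`, removing it leaves an `(m-1)`-matching avoiding `v_p, v_j`, hence also `w_p, w_j`,
that is, an `(m-1)`-matching of `C_{p-2}`. Throughout, matchings of `C_b` that avoid the
vertices `v_i`, `i ∉ range f`, are identified with matchings of `C_a` along the embedding of
coronas induced by `f : Fin a ↪ Fin b`: a pendant vertex `w_i` can only be matched to `v_i`.
-/

lemma Sym2.exists_map_eq_of_forall_mem_range {α β : Type*} {f : α → β} {e : Sym2 β}
    (he : ∀ y ∈ e, y ∈ Set.range f) : ∃ d : Sym2 α, d.map f = e := by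
  induction e using Sym2.ind with
  | _ x y =>
    obtain ⟨a, rfl⟩ := he x (Sym2.mem_mk_left x y)
    obtain ⟨b, rfl⟩ := he y (Sym2.mem_mk_right _ y)
    exact ⟨s(a, b), rfl⟩

lemma Finset.exists_map_eq_of_forall_mem_range {α β : Type*} (f : α ↪ β) {t : Finset β}
    (ht : ∀ y ∈ t, y ∈ Set.range f) : ∃ s : Finset α, s.map f = t := by
  refine ⟨t.preimage f f.injective.injOn, Finset.ext fun y => ?_⟩
  simp only [Finset.mem_map, Finset.mem_preimage]
  refine ⟨by rintro ⟨x, hx, rfl⟩; exact hx, fun hy => ?_⟩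
  obtain ⟨x, rfl⟩ := ht y hy
  exact ⟨x, hy, rfl⟩

namespace IsNMatching

variable {V W : Type*} {G : SimpleGraph V} {H : SimpleGraph W} {m : ℕ} {t : Finset (Sym2 V)}

lemma eq_of_mem_of_mem (ht : IsNMatching G m t) {e f : Sym2 V} (he : e ∈ t) (hf : f ∈ t)
    {v : V} (hve : v ∈ e) (hvf : v ∈ f) : e = f :=
  by_contra fun hne => ht.2.2 e he f hf hne v hve hvf

lemma map_iff (φ : G ↪g H) {s : Finset (Sym2 V)} :
    IsNMatching H m (s.map φ.toEmbedding.sym2Map) ↔ IsNMatching G m s := by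
  simp only [IsNMatching, Finset.card_map, Finset.forall_mem_map, Function.Embedding.sym2Map_apply,
    RelEmbedding.coe_toEmbedding, SimpleGraph.Embedding.map_mem_edgeSet_iff,
    (Sym2.map.injective φ.injective).ne_iff, Sym2.mem_map, forall_exists_index, and_imp,
    forall_apply_eq_imp_iff₂, not_exists, not_and, φ.injective.eq_iff]
  aesop

noncomputable def mapEquiv (φ : G ↪g H) :
    {s // IsNMatching G m s} ≃
      {t // IsNMatching H m t ∧ ∀ e ∈ t, ∀ w ∈ e, w ∈ Set.range φ} :=
  Equiv.ofBijective
    (fun s => ⟨s.1.map φ.toEmbedding.sym2Map, (map_iff φ).2 s.2, by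
      simp only [Finset.forall_mem_map, Function.Embedding.sym2Map_apply, Sym2.mem_map]
      rintro e - w ⟨v, -, rfl⟩
      exact ⟨v, rfl⟩⟩)
    ⟨fun s s' h => Subtype.ext (Finset.map_injective _ (congrArg (·.1) h)), by
      rintro ⟨t, ht, hrange⟩
      obtain ⟨s, rfl⟩ := Finset.exists_map_eq_of_forall_mem_range φ.toEmbedding.sym2Map
        fun e he => Sym2.exists_map_eq_of_forall_mem_range (hrange e he)
      exact ⟨⟨s, (map_iff φ).1 ht⟩, rfl⟩⟩

lemma erase [DecidableEq V] (ht : IsNMatching G (m + 1) t) {e : Sym2 V} (he : e ∈ t) :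
    IsNMatching G m (t.erase e) :=
  ⟨by rw [Finset.card_erase_of_mem he, ht.1]; rfl,
    fun f hf => ht.2.1 f (Finset.mem_of_mem_erase hf),
    fun f hf g hg => ht.2.2 f (Finset.mem_of_mem_erase hf) g (Finset.mem_of_mem_erase hg)⟩

lemma insert_of_forall_notMem [DecidableEq V] (ht : IsNMatching G m t) {e : Sym2 V}
    (he : e ∈ G.edgeSet) (hfree : ∀ f ∈ t, ∀ v ∈ e, v ∉ f) :
    IsNMatching G (m + 1) (insert e t) := by
  have het : e ∉ t := fun h => hfree e h _ e.out_fst_mem e.out_fst_mem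
  refine ⟨by rw [Finset.card_insert_of_notMem het, ht.1], ?_, ?_⟩
  · rintro f hf
    rcases Finset.mem_insert.1 hf with rfl | hft
    exacts [he, ht.2.1 f hft]
  · intro f hf g hg hfg v hvf hvg
    rcases Finset.mem_insert.1 hf with rfl | hft <;> rcases Finset.mem_insert.1 hg with rfl | hgt
    · exact hfg rfl
    · exact hfree g hgt v hvf hvg
    · exact hfree f hft v hvg hvf
    · exact ht.2.2 f hft g hgt hfg v hvf hvg

def eraseEquiv [DecidableEq V] {e : Sym2 V} (he : e ∈ G.edgeSet) :
    {t // IsNMatching G (m + 1) t ∧ e ∈ t} ≃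
      {t // IsNMatching G m t ∧ ∀ f ∈ t, ∀ v ∈ e, v ∉ f} where
  toFun t := ⟨t.1.erase e, t.2.1.erase t.2.2, fun _ hf _ hve hvf =>
    Finset.ne_of_mem_erase hf
      (t.2.1.eq_of_mem_of_mem (Finset.mem_of_mem_erase hf) t.2.2 hvf hve)⟩
  invFun t :=
    ⟨insert e t.1, t.2.1.insert_of_forall_notMem he t.2.2, Finset.mem_insert_self e t.1⟩
  left_inv t := Subtype.ext (Finset.insert_erase t.2.2)
  right_inv t := Subtype.ext
    (Finset.erase_insert fun h => t.2.2 e h _ e.out_fst_mem e.out_fst_mem)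

lemma card_eq_card_avoiding_add_sum [Finite V] (v : V) [Fintype (G.neighborSet v)] :
    Nat.card {t // IsNMatching G m t} =
      Nat.card {t // IsNMatching G m t ∧ ∀ e ∈ t, v ∉ e} +
        ∑ u : G.neighborSet v, Nat.card {t // IsNMatching G m t ∧ s(v, ↑u) ∈ t} := by
  let F : {t // IsNMatching G m t ∧ ∀ e ∈ t, v ∉ e} ⊕
      (Σ u : G.neighborSet v, {t // IsNMatching G m t ∧ s(v, ↑u) ∈ t}) →
        {t // IsNMatching G m t} :=
    Sum.elim (fun t => ⟨t.1, t.2.1⟩) (fun ut => ⟨ut.2.1, ut.2.2.1⟩)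
  have hF : F.Bijective := by
    constructor
    · rintro (⟨t, ht, hv⟩ | ⟨u, t, ht, hu⟩) (⟨t', ht', hv'⟩ | ⟨u', t', ht', hu'⟩) h
        <;>
        obtain rfl : t = t' := congrArg Subtype.val h
      · rfl
      · exact (hv _ hu' (Sym2.mem_mk_left _ _)).elim
      · exact (hv' _ hu (Sym2.mem_mk_left _ _)).elim
      · have huu' := Sym2.congr_right.1
          (ht.eq_of_mem_of_mem hu hu' (Sym2.mem_mk_left _ _) (Sym2.mem_mk_left _ _))
        exact congrArg Sum.inr (Sigma.subtype_ext (Subtype.ext huu') rfl)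
    · rintro ⟨t, ht⟩
      by_cases hv : ∀ e ∈ t, v ∉ e
      · exact ⟨.inl ⟨t, ht, hv⟩, rfl⟩
      push Not at hv
      obtain ⟨e, he, hve⟩ := hv
      have hother := Sym2.other_spec hve
      have hadj : G.Adj v (Sym2.Mem.other hve) := by
        rw [← SimpleGraph.mem_edgeSet, hother]
        exact ht.2.1 e he
      exact ⟨.inr ⟨⟨_, hadj⟩, t, ht, hother.symm ▸ he⟩, rfl⟩
  rw [← Nat.card_congr (Equiv.ofBijective F hF), Nat.card_sum, Nat.card_sigma]

end IsNMatching

def coronaEmbedding {a b : ℕ} (f : Fin a ↪ Fin b) : corona a ↪g corona b where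
  toEmbedding := f.sumMap f
  map_rel_iff' {x y} := by
    cases x <;> cases y <;> simp [corona, f.injective.eq_iff]

lemma corona_inl_mem_of_inr_mem {p : ℕ} {e : Sym2 (Fin p ⊕ Fin p)}
    (he : e ∈ (corona p).edgeSet) {i : Fin p} (hi : inr i ∈ e) : inl i ∈ e := by
  induction e using Sym2.ind with
  | _ x y =>
    rcases he with ⟨_, _, _, rfl, rfl⟩ | ⟨_, rfl, rfl⟩ | ⟨_, rfl, rfl⟩ <;> simp_all

lemma card_corona_avoiding {a b m : ℕ} (f : Fin a ↪ Fin b) {S : Set (Fin b)}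
    (hS : Set.range f = Sᶜ) :
    Nat.card {t // IsNMatching (corona b) m t ∧ ∀ i ∈ S, ∀ e ∈ t, inl i ∉ e} =
      aNum a m := by
  rw [aNum, Nat.card_congr (IsNMatching.mapEquiv (coronaEmbedding f))]
  refine Nat.card_congr (Equiv.subtypeEquivRight fun t => and_congr_right fun ht => ?_)
  have hrange (i : Fin b) (hi : i ∉ S) : ∃ j, f j = i := by
    rwa [← Set.mem_compl_iff, ← hS] at hi
  constructor
  · intro hfree e he w hw
    cases w with
    | inl i =>
      obtain ⟨j, rfl⟩ := hrange i fun hi => hfree i hi e he hw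
      exact ⟨inl j, rfl⟩
    | inr i =>
      obtain ⟨j, rfl⟩ :=
        hrange i fun hi => hfree i hi e he (corona_inl_mem_of_inr_mem (ht.2.1 e he) hw)
      exact ⟨inr j, rfl⟩
  · rintro hcov i hi e he hie
    obtain ⟨x | x, hx⟩ := hcov e he _ hie
    · exact (Set.mem_compl_iff _ _).1 (hS ▸ ⟨x, Sum.inl_injective hx⟩) hi
    · exact Sum.inr_ne_inl hx

section LastVertex

variable {r m : ℕ}

lemma card_corona_avoiding_last :
    Nat.card {t // IsNMatching (corona (r + 2)) m t ∧ ∀ e ∈ t, inl (Fin.last (r + 1)) ∉ e} =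
      aNum (r + 1) m := by
  have hS : Set.range (Fin.castSuccEmb : Fin (r + 1) ↪ Fin (r + 2)) = {Fin.last (r + 1)}ᶜ :=
    Set.ext fun _ => Fin.exists_castSucc_eq
  simpa using card_corona_avoiding Fin.castSuccEmb hS

lemma card_corona_mem_pendant_last :
    Nat.card {t // IsNMatching (corona (r + 2)) (m + 1) t ∧
      s(inl (Fin.last (r + 1)), inr (Fin.last (r + 1))) ∈ t} = aNum (r + 1) m := by
  rw [Nat.card_congr (IsNMatching.eraseEquiv (Or.inr (Or.inl ⟨_, rfl, rfl⟩))),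
    ← card_corona_avoiding_last]
  refine Nat.card_congr (Equiv.subtypeEquivRight fun t => and_congr_right fun ht => ?_)
  simp only [Sym2.mem_iff, forall_eq_or_imp, forall_eq]
  exact ⟨fun h e he => (h e he).1, fun h e he =>
    ⟨h e he, fun hr => h e he (corona_inl_mem_of_inr_mem (ht.2.1 e he) hr)⟩⟩

lemma card_corona_mem_internal_last (j : Fin (r + 1)) :
    Nat.card {t // IsNMatching (corona (r + 2)) (m + 1) t ∧
      s(inl (Fin.last (r + 1)), inl j.castSucc) ∈ t} = aNum r m := by
  have hS : Set.range (j.succAboveEmb.trans Fin.castSuccEmb) =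
      {Fin.last (r + 1), j.castSucc}ᶜ := by
    ext i
    simp only [Set.mem_range, Function.Embedding.trans_apply, Fin.coe_succAboveEmb,
      Fin.coe_castSuccEmb, Set.mem_compl_iff, Set.mem_insert_iff, Set.mem_singleton_iff, not_or]
    constructor
    · rintro ⟨k, rfl⟩
      exact ⟨(Fin.castSucc_lt_last _).ne,
        fun h => Fin.succAbove_ne j k (Fin.castSucc_injective _ h)⟩
    · rintro ⟨hlast, hj⟩
      obtain ⟨i, rfl⟩ := Fin.exists_castSucc_eq.2 hlast
      obtain ⟨k, rfl⟩ := Fin.exists_succAbove_eq fun h => hj (congrArg Fin.castSucc h)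
      exact ⟨k, rfl⟩
  rw [Nat.card_congr (IsNMatching.eraseEquiv
      (Or.inl ⟨_, _, (Fin.castSucc_lt_last j).ne', rfl, rfl⟩)), ← card_corona_avoiding _ hS]
  refine Nat.card_congr (Equiv.subtypeEquivRight fun t => and_congr_right fun _ => ?_)
  simp only [Sym2.mem_iff, forall_eq_or_imp, forall_eq, Set.mem_insert_iff, Set.mem_singleton_iff]
  exact forall₂_and

noncomputable def lastNeighborEquiv (r : ℕ) :
    Option (Fin (r + 1)) ≃ (corona (r + 2)).neighborSet (inl (Fin.last (r + 1))) :=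
  Equiv.ofBijective
    (fun o => o.elim ⟨inr (Fin.last (r + 1)), Or.inr (Or.inl ⟨_, rfl, rfl⟩)⟩
      fun j => ⟨inl j.castSucc, Or.inl ⟨_, _, (Fin.castSucc_lt_last j).ne', rfl, rfl⟩⟩)
    ⟨by
      rintro (_ | j) (_ | j') h <;> simp_all [Subtype.ext_iff], by
      rintro ⟨w, ⟨i, j, hij, hi, rfl⟩ | ⟨i, hi, rfl⟩ | ⟨i, hi, -⟩⟩
      · obtain rfl := Sum.inl_injective hi
        obtain ⟨k, rfl⟩ := Fin.exists_castSucc_eq.2 hij.symm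
        exact ⟨some k, rfl⟩
      · obtain rfl := Sum.inl_injective hi
        exact ⟨none, rfl⟩
      · exact (Sum.inl_ne_inr hi).elim⟩

lemma lastNeighborEquiv_none (r : ℕ) :
    (lastNeighborEquiv r none : Fin (r + 2) ⊕ Fin (r + 2)) = inr (Fin.last (r + 1)) := rfl

lemma lastNeighborEquiv_some (r : ℕ) (j : Fin (r + 1)) :
    (lastNeighborEquiv r (some j) : Fin (r + 2) ⊕ Fin (r + 2)) = inl j.castSucc := rfl

end LastVertex

/-- For all integers `p ≥ 2` and `m ≥ 1`, the numbers `a_{p,m}` satisfy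
the recurrence `a_{p,m} = a_{p-1,m-1} + a_{p-1,m} + (p-1)·a_{p-2,m-1}`. -/
theorem aNum_recurrence (p m : ℕ) (hp : 2 ≤ p) (hm : 1 ≤ m) :
    aNum p m = aNum (p - 1) (m - 1) + aNum (p - 1) m + (p - 1) * aNum (p - 2) (m - 1) := by
  obtain ⟨r, rfl⟩ := Nat.exists_eq_add_of_le' hp
  obtain ⟨n, rfl⟩ := Nat.exists_eq_add_of_le' hm
  show aNum (r + 2) (n + 1) = aNum (r + 1) n + aNum (r + 1) (n + 1) + (r + 1) * aNum r n
  classical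
  rw [aNum, IsNMatching.card_eq_card_avoiding_add_sum (inl (Fin.last (r + 1))),
    card_corona_avoiding_last, ← (lastNeighborEquiv r).sum_comp, Fintype.sum_option]
  simp only [lastNeighborEquiv_none, lastNeighborEquiv_some, card_corona_mem_pendant_last,
    card_corona_mem_internal_last, Finset.sum_const, Finset.card_univ, Fintype.card_fin,
    smul_eq_mul]
  ring
end

section
/- Fix an integer p > 0. The sequence (a_{p,m})_{0 ≤ m ≤ p} is symmetric and unimodal: a_{p,m} = a_{p,p−m} for all 0 ≤ m ≤ p, and a_{p,m−1} ≤ a_{p,m} whenever 1 ≤ m and 2m ≤ p (hence, by symmetry, a_{p,m} ≥ a_{p,m+1} whenever 2m ≥ p and m+1 ≤ p). -/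
open Sum Matrix

/-! An `m`-matching of `C_p` splits uniquely into its internal edges, a `k`-matching `t` of the
complete graph `K_p`, and its pendant edges, which sit at an arbitrary `(m - k)`-subset of the
`p - 2k` vertices not covered by `t`. Hence `a_{p,m} = ∑_t C(p - 2|t|, m - |t|)`, summed over the
matchings `t` of `K_p`. As a function of `m`, each summand is the binomial row `C(p - 2k, ·)`
shifted by `k`, so it is symmetric about `p / 2` and increases up to `p / 2`; so is the sum. -/

namespace Corona

open Finset

/-- The number of ways to complete a `k`-edge matching of `K_n` by `m - k` pendant edges at the
`n - 2k` uncovered vertices; the `if` is needed because `m - k` truncates to `0` when `m < k`. -/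
def extensionCount (n k m : ℕ) : ℕ :=
  if k ≤ m then (n - 2 * k).choose (m - k) else 0

lemma extensionCount_sub {n k m : ℕ} (hk : 2 * k ≤ n) (hm : m ≤ n) :
    extensionCount n k (n - m) = extensionCount n k m := by
  unfold extensionCount
  split_ifs with h₁ h₂ h₂
  · rw [show n - m - k = n - 2 * k - (m - k) by omega, Nat.choose_symm (by omega)]
  · exact Nat.choose_eq_zero_of_lt (by omega)
  · exact (Nat.choose_eq_zero_of_lt (by omega)).symm
  · rfl

lemma extensionCount_le_succ {n k m : ℕ} (hm : 2 * (m + 1) ≤ n) :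
    extensionCount n k m ≤ extensionCount n k (m + 1) := by
  unfold extensionCount
  split_ifs with h₁ h₂
  · rw [show m + 1 - k = m - k + 1 by omega]
    exact Nat.choose_le_succ_of_lt_half_left (by omega)
  · omega
  all_goals exact Nat.zero_le _

variable {p : ℕ}

def internalEdge (e : Sym2 (Fin p)) : Sym2 (Fin p ⊕ Fin p) := e.map inl

def pendantEdge (i : Fin p) : Sym2 (Fin p ⊕ Fin p) := s(inl i, inr i)

lemma internalEdge_injective : Function.Injective (internalEdge (p := p)) :=
  Sym2.map.injective inl_injective

lemma pendantEdge_injective : Function.Injective (pendantEdge (p := p)) := by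
  intro i j h
  simpa [pendantEdge] using h

@[simp] lemma inl_mem_internalEdge {i : Fin p} {e : Sym2 (Fin p)} :
    inl i ∈ internalEdge e ↔ i ∈ e := by
  simp [internalEdge, Sym2.mem_map]

@[simp] lemma inr_notMem_internalEdge {i : Fin p} {e : Sym2 (Fin p)} :
    inr i ∉ internalEdge e := by
  simp [internalEdge, Sym2.mem_map]

@[simp] lemma mem_pendantEdge {v : Fin p ⊕ Fin p} {i : Fin p} :
    v ∈ pendantEdge i ↔ v = inl i ∨ v = inr i := by
  simp [pendantEdge]

@[simp] lemma internalEdge_ne_pendantEdge (e : Sym2 (Fin p)) (i : Fin p) :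
    internalEdge e ≠ pendantEdge i := fun h =>
  inr_notMem_internalEdge (h ▸ mem_pendantEdge.2 (Or.inr rfl))

@[simp] lemma pendantEdge_ne_internalEdge (i : Fin p) (e : Sym2 (Fin p)) :
    pendantEdge i ≠ internalEdge e :=
  (internalEdge_ne_pendantEdge e i).symm

lemma internalEdge_mem_edgeSet {e : Sym2 (Fin p)} :
    internalEdge e ∈ (corona p).edgeSet ↔ e ∈ (⊤ : SimpleGraph (Fin p)).edgeSet := by
  induction e with
  | _ a b => simp [internalEdge, corona]

lemma pendantEdge_mem_edgeSet (i : Fin p) : pendantEdge i ∈ (corona p).edgeSet :=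
  Or.inr (Or.inl ⟨i, rfl, rfl⟩)

lemma exists_eq_internalEdge_or_pendantEdge {e : Sym2 (Fin p ⊕ Fin p)}
    (he : e ∈ (corona p).edgeSet) :
    (∃ e', internalEdge e' = e) ∨ ∃ i, pendantEdge i = e := by
  induction e with
  | _ x y =>
    rcases he with ⟨i, j, -, rfl, rfl⟩ | ⟨i, rfl, rfl⟩ | ⟨i, rfl, rfl⟩
    · exact Or.inl ⟨s(i, j), rfl⟩
    · exact Or.inr ⟨i, rfl⟩
    · exact Or.inr ⟨i, Sym2.eq_swap⟩

def ofParts (x : Finset (Sym2 (Fin p)) × Finset (Fin p)) : Finset (Sym2 (Fin p ⊕ Fin p)) :=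
  x.1.image internalEdge ∪ x.2.image pendantEdge

noncomputable def parts (s : Finset (Sym2 (Fin p ⊕ Fin p))) :
    Finset (Sym2 (Fin p)) × Finset (Fin p) :=
  (s.preimage internalEdge internalEdge_injective.injOn,
    s.preimage pendantEdge pendantEdge_injective.injOn)

@[simp] lemma mem_parts_fst {s : Finset (Sym2 (Fin p ⊕ Fin p))} {e : Sym2 (Fin p)} :
    e ∈ (parts s).1 ↔ internalEdge e ∈ s := by
  simp [parts]

@[simp] lemma mem_parts_snd {s : Finset (Sym2 (Fin p ⊕ Fin p))} {i : Fin p} :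
    i ∈ (parts s).2 ↔ pendantEdge i ∈ s := by
  simp [parts]

lemma mem_ofParts {x : Finset (Sym2 (Fin p)) × Finset (Fin p)} {e : Sym2 (Fin p ⊕ Fin p)} :
    e ∈ ofParts x ↔ (∃ e' ∈ x.1, internalEdge e' = e) ∨ ∃ i ∈ x.2, pendantEdge i = e := by
  simp [ofParts]

lemma card_ofParts (x : Finset (Sym2 (Fin p)) × Finset (Fin p)) :
    #(ofParts x) = #x.1 + #x.2 := by
  rw [ofParts, card_union_of_disjoint, card_image_of_injective _ internalEdge_injective,
    card_image_of_injective _ pendantEdge_injective]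
  simp only [disjoint_left, mem_image]
  rintro _ ⟨e, -, rfl⟩ ⟨i, -, h⟩
  exact internalEdge_ne_pendantEdge e i h.symm

lemma parts_ofParts (x : Finset (Sym2 (Fin p)) × Finset (Fin p)) : parts (ofParts x) = x := by
  ext <;> simp [mem_ofParts, internalEdge_injective.eq_iff, pendantEdge_injective.eq_iff]

lemma ofParts_parts {s : Finset (Sym2 (Fin p ⊕ Fin p))}
    (hs : ∀ e ∈ s, e ∈ (corona p).edgeSet) : ofParts (parts s) = s := by
  ext e
  simp only [mem_ofParts, mem_parts_fst, mem_parts_snd]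
  constructor
  · rintro (⟨e', he', rfl⟩ | ⟨i, hi, rfl⟩) <;> assumption
  · intro he
    rcases exists_eq_internalEdge_or_pendantEdge (hs e he) with ⟨e', rfl⟩ | ⟨i, rfl⟩
    · exact Or.inl ⟨e', he, rfl⟩
    · exact Or.inr ⟨i, he, rfl⟩

def covered (t : Finset (Sym2 (Fin p))) : Finset (Fin p) := t.biUnion Sym2.toFinset

lemma mem_covered {i : Fin p} {t : Finset (Sym2 (Fin p))} :
    i ∈ covered t ↔ ∃ e ∈ t, i ∈ e := by
  simp [covered]

lemma card_covered {k : ℕ} {t : Finset (Sym2 (Fin p))}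
    (ht : IsNMatching (⊤ : SimpleGraph (Fin p)) k t) : #(covered t) = 2 * k := by
  obtain ⟨rfl, hedge, hdisj⟩ := ht
  rw [covered, card_biUnion, sum_const_nat, mul_comm]
  · intro e he
    exact Sym2.card_toFinset_of_not_isDiag e (by simpa using hedge e he)
  · intro e he f hf hef
    simp only [Function.onFun, disjoint_left, Sym2.mem_toFinset]
    exact hdisj e he f hf hef

lemma two_mul_le_of_isNMatching_top {k : ℕ} {t : Finset (Sym2 (Fin p))}
    (ht : IsNMatching (⊤ : SimpleGraph (Fin p)) k t) : 2 * k ≤ p := by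
  simpa [card_covered ht] using card_le_univ (covered t)

open scoped Classical in
noncomputable def splitMatchings (p m : ℕ) : Finset (Finset (Sym2 (Fin p)) × Finset (Fin p)) :=
  univ.filter fun x => IsNMatching (⊤ : SimpleGraph (Fin p)) #x.1 x.1 ∧
    Disjoint x.2 (covered x.1) ∧ #x.1 + #x.2 = m

lemma mem_splitMatchings {m : ℕ} {x : Finset (Sym2 (Fin p)) × Finset (Fin p)} :
    x ∈ splitMatchings p m ↔ IsNMatching (⊤ : SimpleGraph (Fin p)) #x.1 x.1 ∧
      Disjoint x.2 (covered x.1) ∧ #x.1 + #x.2 = m := by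
  simp [splitMatchings]

lemma isNMatching_ofParts {m : ℕ} {x : Finset (Sym2 (Fin p)) × Finset (Fin p)}
    (hx : x ∈ splitMatchings p m) : IsNMatching (corona p) m (ofParts x) := by
  obtain ⟨⟨-, htop, hdisj⟩, hT, hcard⟩ := mem_splitMatchings.1 hx
  simp only [IsNMatching, card_ofParts, hcard, mem_ofParts, true_and]
  constructor
  · rintro _ (⟨e, he, rfl⟩ | ⟨i, -, rfl⟩)
    · exact internalEdge_mem_edgeSet.2 (htop e he)
    · exact pendantEdge_mem_edgeSet i
  · rintro _ (⟨e, he, rfl⟩ | ⟨i, hi, rfl⟩) _ (⟨f, hf, rfl⟩ | ⟨j, hj, rfl⟩) hne (a | a) hae haf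
    all_goals simp only [inl_mem_internalEdge, inr_notMem_internalEdge, mem_pendantEdge,
      inl.injEq, inr.injEq, reduceCtorEq, or_false, false_or, internalEdge_injective.ne_iff,
      pendantEdge_injective.ne_iff, ne_eq] at hae haf hne
    · exact hdisj e he f hf hne a hae haf
    · exact disjoint_left.1 hT hj (mem_covered.2 ⟨e, he, haf ▸ hae⟩)
    · exact disjoint_left.1 hT hi (mem_covered.2 ⟨f, hf, hae ▸ haf⟩)
    all_goals exact hne (hae ▸ haf)

lemma parts_mem_splitMatchings {m : ℕ} {s : Finset (Sym2 (Fin p ⊕ Fin p))}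
    (hs : IsNMatching (corona p) m s) : parts s ∈ splitMatchings p m := by
  obtain ⟨hcard, hedge, hdisj⟩ := hs
  refine mem_splitMatchings.2 ⟨⟨rfl, ?_, ?_⟩, ?_, ?_⟩
  · intro e he
    exact internalEdge_mem_edgeSet.1 (hedge _ (mem_parts_fst.1 he))
  · intro e he f hf hef a hae haf
    exact hdisj _ (mem_parts_fst.1 he) _ (mem_parts_fst.1 hf) (internalEdge_injective.ne hef)
      (inl a) (inl_mem_internalEdge.2 hae) (inl_mem_internalEdge.2 haf)
  · refine disjoint_left.2 fun i hi hic => ?_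
    obtain ⟨e, he, hie⟩ := mem_covered.1 hic
    exact hdisj _ (mem_parts_fst.1 he) _ (mem_parts_snd.1 hi) (internalEdge_ne_pendantEdge e i)
      (inl i) (inl_mem_internalEdge.2 hie) (mem_pendantEdge.2 (Or.inl rfl))
  · rw [← card_ofParts, ofParts_parts hedge, hcard]

lemma card_splitMatchings (p m : ℕ) : #(splitMatchings p m) = aNum p m := by
  classical
  rw [aNum, Nat.card_eq_fintype_card, Fintype.card_subtype]
  refine card_nbij' ofParts parts (fun x hx => ?_) (fun s hs => ?_) (fun x _ => parts_ofParts x)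
    (fun s hs => ofParts_parts (mem_filter.1 hs).2.2.1)
  · exact mem_filter.2 ⟨mem_univ _, isNMatching_ofParts hx⟩
  · exact parts_mem_splitMatchings (mem_filter.1 hs).2

lemma filter_fst_splitMatchings_of_le {m : ℕ} {t : Finset (Sym2 (Fin p))}
    (ht : IsNMatching (⊤ : SimpleGraph (Fin p)) #t t) (hm : #t ≤ m) :
    (splitMatchings p m).filter (·.1 = t) = {t} ×ˢ powersetCard (m - #t) (covered t)ᶜ := by
  ext ⟨t', T⟩
  simp only [mem_filter, mem_splitMatchings, mem_product, mem_singleton, mem_powersetCard,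
    subset_compl_iff_disjoint_right]
  constructor
  · rintro ⟨⟨-, hT, hcard⟩, rfl⟩
    exact ⟨rfl, hT, by omega⟩
  · rintro ⟨rfl, hT, hcard⟩
    exact ⟨⟨ht, hT, by omega⟩, rfl⟩

lemma filter_fst_splitMatchings_of_lt {m : ℕ} {t : Finset (Sym2 (Fin p))} (hm : m < #t) :
    (splitMatchings p m).filter (·.1 = t) = ∅ := by
  refine filter_eq_empty_iff.2 fun x hx hxt => ?_
  have := (mem_splitMatchings.1 hx).2.2
  rw [hxt] at this
  omega

lemma card_filter_fst_splitMatchings {m : ℕ} {t : Finset (Sym2 (Fin p))}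
    (ht : IsNMatching (⊤ : SimpleGraph (Fin p)) #t t) :
    #((splitMatchings p m).filter (·.1 = t)) = extensionCount p #t m := by
  rw [extensionCount]
  split_ifs with hm
  · rw [filter_fst_splitMatchings_of_le ht hm, card_product, card_singleton, one_mul,
      card_powersetCard, card_compl, card_covered ht, Fintype.card_fin]
  · rw [filter_fst_splitMatchings_of_lt (not_le.1 hm), card_empty]

open scoped Classical in
noncomputable def topMatchings (p : ℕ) : Finset (Finset (Sym2 (Fin p))) :=
  univ.filter fun t => IsNMatching (⊤ : SimpleGraph (Fin p)) #t t

lemma mem_topMatchings {t : Finset (Sym2 (Fin p))} :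
    t ∈ topMatchings p ↔ IsNMatching (⊤ : SimpleGraph (Fin p)) #t t := by
  simp [topMatchings]

theorem aNum_eq_sum_extensionCount (p m : ℕ) :
    aNum p m = ∑ t ∈ topMatchings p, extensionCount p #t m := by
  classical
  rw [← card_splitMatchings, card_eq_sum_card_fiberwise (f := Prod.fst) (t := topMatchings p)]
  · exact sum_congr rfl fun t ht => card_filter_fst_splitMatchings (mem_topMatchings.1 ht)
  · exact fun x hx => mem_topMatchings.2 (mem_splitMatchings.1 hx).1

theorem aNum_sub {m : ℕ} (hm : m ≤ p) : aNum p (p - m) = aNum p m := by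
  simp only [aNum_eq_sum_extensionCount]
  refine sum_congr rfl fun t ht => extensionCount_sub ?_ hm
  exact two_mul_le_of_isNMatching_top (mem_topMatchings.1 ht)

theorem aNum_le_succ {m : ℕ} (hm : 2 * (m + 1) ≤ p) : aNum p m ≤ aNum p (m + 1) := by
  simp only [aNum_eq_sum_extensionCount]
  exact sum_le_sum fun t _ => extensionCount_le_succ hm

end Corona

open Corona in
theorem aNum_symmetric_unimodal_general (p : ℕ) :
    (∀ m : ℕ, m ≤ p → aNum p m = aNum p (p - m)) ∧
    (∀ m : ℕ, 1 ≤ m → 2 * m ≤ p → aNum p (m - 1) ≤ aNum p m) ∧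
    (∀ m : ℕ, p ≤ 2 * m → m + 1 ≤ p → aNum p (m + 1) ≤ aNum p m) := by
  refine ⟨fun m hm => (aNum_sub hm).symm, fun m hm₁ hm => ?_, fun m hpm hmp => ?_⟩
  · obtain ⟨k, rfl⟩ := Nat.exists_eq_add_of_le' hm₁
    exact aNum_le_succ hm
  · rw [← aNum_sub hmp, ← aNum_sub (m := m) (by omega), show p - m = p - (m + 1) + 1 by omega]
    exact aNum_le_succ (by omega)

/-- For a fixed integer `p > 0`, the sequence `(a_{p,m})_{0 ≤ m ≤ p}` is
symmetric and unimodal: `a_{p,m} = a_{p,p-m}` for `0 ≤ m ≤ p`; `a_{p,m-1} ≤ a_{p,m}`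
whenever `1 ≤ m` and `2m ≤ p`; and (by symmetry) `a_{p,m} ≥ a_{p,m+1}` whenever
`2m ≥ p` and `m + 1 ≤ p`. -/
theorem aNum_symmetric_unimodal (p : ℕ) (hp : 0 < p) :
    (∀ m : ℕ, m ≤ p → aNum p m = aNum p (p - m)) ∧
    (∀ m : ℕ, 1 ≤ m → 2 * m ≤ p → aNum p (m - 1) ≤ aNum p m) ∧
    (∀ m : ℕ, p ≤ 2 * m → m + 1 ≤ p → aNum p (m + 1) ≤ aNum p m) :=
  aNum_symmetric_unimodal_general p
end

section
/- Fix an integer p > 0. The sequence (c_{p,m})_{0 ≤ m ≤ p} is symmetric and unimodal: c_{p,m} = c_{p,p−m} for all 0 ≤ m ≤ p, and c_{p,m−1} ≤ c_{p,m} whenever 1 ≤ m and 2m ≤ p (hence, by symmetry, c_{p,m} ≥ c_{p,m+1} whenever 2m ≥ p and m+1 ≤ p). -/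
open Sum Matrix

/-- An edge of the corona graph is internal if both of its endpoints are `v`-vertices. -/
def isInternal {p : ℕ} (e : Sym2 (Fin p ⊕ Fin p)) : Prop :=
  ∀ v ∈ e, Sum.isLeft v = true

open Classical in
/-- `c_{p,m}`: the sum, over the `m`-matchings `S` of the corona graph `C_p`, of `2^{i(S)}`,
where `i(S)` is the number of internal edges of `S`; equivalently, the number of
`m`-matchings of the double corona graph `C_p^{(2)}`. (For `m = 0` this is `1`, and it is
`0` whenever `C_p` has no `m`-matching.) -/
noncomputable def cNum (p m : ℕ) : ℕ :=
  ∑ s ∈ Finset.univ.filter (fun s : Finset (Sym2 (Fin p ⊕ Fin p)) =>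
      IsNMatching (corona p) m s),
    2 ^ (s.filter (fun e => isInternal e)).card

/-!
An `m`-matching of `C_p` splits into its internal part `I`, a matching of the clique on the
`v_i` covering `2 #I` of them, and its pendant edges, which sit at an arbitrary
`(m - #I)`-subset of the `p - 2 #I` indices that `I` leaves uncovered. Hence
`c_{p,m} = ∑_I 2^{#I} · choose (p - 2 #I) (m - #I)` (a term being `0` when `#I > m`), and both
claims hold term by term: taking complements in the uncovered set gives the symmetry
`m ↦ p - m`, and `choose n (j - 1) ≤ choose n j` for `2 j ≤ n` gives the unimodality.
-/

open Finset Sum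

theorem IsNMatching.subset {V : Type*} {G : SimpleGraph V} {m : ℕ}
    {s t : Finset (Sym2 V)} (hs : IsNMatching G m s) (hts : t ⊆ s) : IsNMatching G #t t :=
  ⟨rfl, fun e he => hs.2.1 e (hts he), fun e he f hf => hs.2.2 e (hts he) f (hts hf)⟩

section Counting

variable {α : Type*}

theorem card_powerset_filter_add_card_eq (F : Finset α) (k m : ℕ) :
    #{T ∈ F.powerset | k + #T = m} = if k ≤ m then (#F).choose (m - k) else 0 := by
  split_ifs with hkm
  · rw [← card_powersetCard, powersetCard_eq_filter]
    congr 1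
    exact filter_congr fun T _ => by omega
  · exact card_eq_zero.mpr (filter_eq_empty_iff.mpr fun T _ => by omega)

theorem card_powerset_filter_add_card_le_succ (F : Finset α) {k m : ℕ}
    (hm : 2 * (m + 1) ≤ 2 * k + #F) :
    #{T ∈ F.powerset | k + #T = m} ≤ #{T ∈ F.powerset | k + #T = m + 1} := by
  rw [card_powerset_filter_add_card_eq, card_powerset_filter_add_card_eq]
  split_ifs with hkm hkm'
  · rw [show m + 1 - k = m - k + 1 by omega]
    exact Nat.choose_le_succ_of_lt_half_left (by omega)
  · omega
  · exact Nat.zero_le _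
  · exact le_rfl

theorem card_powerset_filter_add_card_eq_sub [DecidableEq α] (F : Finset α) {k m p : ℕ}
    (hF : 2 * k + #F = p) (hm : m ≤ p) :
    #{T ∈ F.powerset | k + #T = m} = #{T ∈ F.powerset | k + #T = p - m} := by
  refine card_nbij' (F \ ·) (F \ ·) ?_ ?_ ?_ ?_ <;> intro T hT <;>
    simp only [coe_filter, mem_powerset, Set.mem_ofPred_eq] at hT ⊢
  any_goals exact Finset.sdiff_sdiff_eq_self hT.1
  all_goals
    refine ⟨sdiff_subset, ?_⟩
    rw [card_sdiff_of_subset hT.1]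
    have := card_le_card hT.1
    omega

end Counting

namespace Corona

open scoped Classical

variable {p : ℕ}

def pendant (i : Fin p) : Sym2 (Fin p ⊕ Fin p) := s(inl i, inr i)

noncomputable def pendantIndices (s : Finset (Sym2 (Fin p ⊕ Fin p))) : Finset (Fin p) :=
  {i | pendant i ∈ s}

noncomputable def uncovered (I : Finset (Sym2 (Fin p ⊕ Fin p))) : Finset (Fin p) :=
  {i | ∀ e ∈ I, inl i ∉ e}

noncomputable def internalMatchings (p : ℕ) : Finset (Finset (Sym2 (Fin p ⊕ Fin p))) :=
  {I | IsNMatching (corona p) #I I ∧ ∀ e ∈ I, isInternal e}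

theorem pendant_injective : Function.Injective (pendant (p := p)) := by
  intro i j h
  simpa [pendant] using h

theorem mem_pendant {v : Fin p ⊕ Fin p} {i : Fin p} : v ∈ pendant i ↔ v = inl i ∨ v = inr i :=
  Sym2.mem_iff

theorem not_isInternal_pendant (i : Fin p) : ¬ isInternal (pendant i) :=
  fun h => by simpa using h (inr i) (mem_pendant.mpr (Or.inr rfl))

theorem isInternal_mk_inl (i j : Fin p) : isInternal (s(inl i, inl j) : Sym2 (Fin p ⊕ Fin p)) := by
  intro v hv
  rcases Sym2.mem_iff.mp hv with rfl | rfl <;> rfl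

theorem mem_edgeSet_corona {e : Sym2 (Fin p ⊕ Fin p)} :
    e ∈ (corona p).edgeSet ↔ (∃ i j, i ≠ j ∧ e = s(inl i, inl j)) ∨ ∃ i, e = pendant i := by
  induction e using Sym2.ind with
  | _ a b =>
    rw [SimpleGraph.mem_edgeSet]
    constructor
    · rintro (⟨i, j, hij, rfl, rfl⟩ | ⟨i, rfl, rfl⟩ | ⟨i, rfl, rfl⟩)
      · exact Or.inl ⟨i, j, hij, rfl⟩
      · exact Or.inr ⟨i, rfl⟩
      · exact Or.inr ⟨i, Sym2.eq_swap⟩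
    · rintro (⟨i, j, hij, he⟩ | ⟨i, he⟩)
      · rcases Sym2.eq_iff.mp he with ⟨rfl, rfl⟩ | ⟨rfl, rfl⟩
        · exact Or.inl ⟨i, j, hij, rfl, rfl⟩
        · exact Or.inl ⟨j, i, hij.symm, rfl, rfl⟩
      · rcases Sym2.eq_iff.mp he with ⟨rfl, rfl⟩ | ⟨rfl, rfl⟩
        · exact Or.inr (Or.inl ⟨i, rfl, rfl⟩)
        · exact Or.inr (Or.inr ⟨i, rfl, rfl⟩)

theorem pendant_mem_edgeSet (i : Fin p) : pendant i ∈ (corona p).edgeSet :=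
  mem_edgeSet_corona.mpr (Or.inr ⟨i, rfl⟩)

theorem exists_eq_mk_inl_of_isInternal {e : Sym2 (Fin p ⊕ Fin p)} (he : e ∈ (corona p).edgeSet)
    (hint : isInternal e) : ∃ i j, i ≠ j ∧ e = s(inl i, inl j) := by
  rcases mem_edgeSet_corona.mp he with h | ⟨i, rfl⟩
  · exact h
  · exact absurd hint (not_isInternal_pendant i)

theorem exists_eq_pendant_of_not_isInternal {e : Sym2 (Fin p ⊕ Fin p)}
    (he : e ∈ (corona p).edgeSet) (hint : ¬ isInternal e) : ∃ i, e = pendant i := by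
  rcases mem_edgeSet_corona.mp he with ⟨i, j, -, rfl⟩ | h
  · exact absurd (isInternal_mk_inl i j) hint
  · exact h

theorem card_uncovered {I : Finset (Sym2 (Fin p ⊕ Fin p))} (hI : I ∈ internalMatchings p) :
    2 * #I + #(uncovered I) = p := by
  obtain ⟨⟨-, hedge, hdisj⟩, hint⟩ := (mem_filter.mp hI).2
  set covered := I.biUnion fun e => ({i | inl i ∈ e} : Finset (Fin p))
  have hcompl : uncovered I = coveredᶜ := by
    ext i
    simp [uncovered, covered]
  have hcard : #covered = 2 * #I := by
    rw [card_biUnion, sum_const_nat, mul_comm]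
    · intro e he
      obtain ⟨i, j, hij, rfl⟩ := exists_eq_mk_inl_of_isInternal (hedge e he) (hint e he)
      rw [← card_pair hij]
      congr 1
      ext k
      simp
    · intro e he f hf hef
      simp only [Function.onFun, disjoint_left, mem_filter, mem_univ, true_and]
      exact fun k hke hkf => hdisj e he f hf hef _ hke hkf
  rw [hcompl, card_compl, Fintype.card_fin, hcard]
  have := card_le_univ covered
  rw [Fintype.card_fin] at this
  omega

section Decomposition

variable {m : ℕ} {s I : Finset (Sym2 (Fin p ⊕ Fin p))} {T : Finset (Fin p)}

theorem filter_isInternal_mem_internalMatchings (hs : IsNMatching (corona p) m s) :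
    (s.filter fun e => isInternal e) ∈ internalMatchings p :=
  mem_filter.mpr ⟨mem_univ _, hs.subset (filter_subset _ _), fun _ he => (mem_filter.mp he).2⟩

theorem pendantIndices_subset_uncovered (hs : IsNMatching (corona p) m s) :
    pendantIndices s ⊆ uncovered (s.filter fun e => isInternal e) := by
  intro i hi
  simp only [pendantIndices, uncovered, mem_filter, mem_univ, true_and] at hi ⊢
  rintro e ⟨he, hint⟩ hie
  by_cases heq : e = pendant i
  · exact not_isInternal_pendant i (heq ▸ hint)
  · exact hs.2.2 e he _ hi heq _ hie (mem_pendant.mpr (Or.inl rfl))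

theorem filter_not_isInternal_eq_image_pendant (hs : ∀ e ∈ s, e ∈ (corona p).edgeSet) :
    (s.filter fun e => ¬ isInternal e) = (pendantIndices s).image pendant := by
  ext e
  simp only [mem_filter, mem_image, pendantIndices, mem_univ, true_and]
  constructor
  · rintro ⟨he, hint⟩
    obtain ⟨i, rfl⟩ := exists_eq_pendant_of_not_isInternal (hs e he) hint
    exact ⟨i, he, rfl⟩
  · rintro ⟨i, hi, rfl⟩
    exact ⟨hi, not_isInternal_pendant i⟩

theorem card_filter_isInternal_add_card_pendantIndices (hs : IsNMatching (corona p) m s) :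
    #(s.filter fun e => isInternal e) + #(pendantIndices s) = m := by
  rw [← card_image_of_injective _ pendant_injective,
    ← filter_not_isInternal_eq_image_pendant hs.2.1, card_filter_add_card_filter_not, hs.1]

theorem filter_isInternal_union_image_pendantIndices (hs : ∀ e ∈ s, e ∈ (corona p).edgeSet) :
    (s.filter fun e => isInternal e) ∪ (pendantIndices s).image pendant = s := by
  rw [← filter_not_isInternal_eq_image_pendant hs, filter_union_filter_not_eq]

theorem filter_isInternal_union_image_pendant (hI : ∀ e ∈ I, isInternal e) :
    ((I ∪ T.image pendant).filter fun e => isInternal e) = I := by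
  rw [filter_union, filter_true_of_mem hI, filter_false_of_mem, union_empty]
  simpa using fun i _ => not_isInternal_pendant i

theorem pendantIndices_union_image_pendant (hI : ∀ e ∈ I, isInternal e) :
    pendantIndices (I ∪ T.image pendant) = T := by
  ext i
  have : pendant i ∉ I := fun hi => not_isInternal_pendant i (hI _ hi)
  simp [pendantIndices, pendant_injective.eq_iff, this]

theorem isNMatching_union_image_pendant (hI : I ∈ internalMatchings p) (hT : T ⊆ uncovered I) :
    IsNMatching (corona p) (#I + #T) (I ∪ T.image pendant) := by
  obtain ⟨⟨-, hedge, hdisj⟩, hint⟩ := (mem_filter.mp hI).2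
  have hIT : Disjoint I (T.image pendant) := by
    refine disjoint_left.mpr fun e he he' => ?_
    obtain ⟨i, -, rfl⟩ := mem_image.mp he'
    exact not_isInternal_pendant i (hint _ he)
  have hsep : ∀ e ∈ I, ∀ j ∈ T, ∀ v ∈ e, v ∉ pendant j := by
    intro e he j hj v hve hvj
    rcases mem_pendant.mp hvj with rfl | rfl
    · exact (mem_filter.mp (hT hj)).2 e he hve
    · simpa using hint e he _ hve
  refine ⟨by rw [card_union_of_disjoint hIT, card_image_of_injective _ pendant_injective], ?_, ?_⟩
  · intro e he
    rcases mem_union.mp he with he | he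
    · exact hedge e he
    · obtain ⟨i, -, rfl⟩ := mem_image.mp he
      exact pendant_mem_edgeSet i
  · intro e he f hf hef v hve hvf
    rcases mem_union.mp he with he | he <;> rcases mem_union.mp hf with hf | hf
    · exact hdisj e he f hf hef v hve hvf
    · obtain ⟨j, hj, rfl⟩ := mem_image.mp hf
      exact hsep e he j hj v hve hvf
    · obtain ⟨i, hi, rfl⟩ := mem_image.mp he
      exact hsep f hf i hi v hvf hve
    · obtain ⟨i, -, rfl⟩ := mem_image.mp he
      obtain ⟨j, -, rfl⟩ := mem_image.mp hf
      have hij : i = j := by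
        rcases mem_pendant.mp hve with rfl | rfl <;> simpa [mem_pendant] using hvf
      exact hef (hij ▸ rfl)

end Decomposition

end Corona

open Corona

open scoped Classical in
theorem cNum_eq_sum (p m : ℕ) :
    cNum p m = ∑ I ∈ internalMatchings p,
      2 ^ #I * #{T ∈ (uncovered I).powerset | #I + #T = m} := by
  have hsplit : cNum p m = ∑ x ∈ (internalMatchings p).sigma
      (fun I => {T ∈ (uncovered I).powerset | #I + #T = m}), 2 ^ #x.1 := by
    refine sum_nbij' (fun s => ⟨s.filter fun e => isInternal e, pendantIndices s⟩)
      (fun x => x.1 ∪ x.2.image pendant) ?_ ?_ ?_ ?_ ?_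
    · intro s hs
      have hs : IsNMatching (corona p) m s := (mem_filter.mp hs).2
      simp only [mem_sigma, mem_filter, mem_powerset]
      exact ⟨filter_isInternal_mem_internalMatchings hs, pendantIndices_subset_uncovered hs,
        card_filter_isInternal_add_card_pendantIndices hs⟩
    · rintro ⟨I, T⟩ hx
      simp only [mem_sigma, mem_filter, mem_powerset] at hx
      obtain ⟨hI, hT, rfl⟩ := hx
      simpa using isNMatching_union_image_pendant hI hT
    · intro s hs
      exact filter_isInternal_union_image_pendantIndices (mem_filter.mp hs).2.2.1
    · rintro ⟨I, T⟩ hx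
      have hint := (mem_filter.mp (mem_sigma.mp hx).1).2.2
      simp only [filter_isInternal_union_image_pendant hint,
        pendantIndices_union_image_pendant hint]
    · intro s _
      rfl
  rw [hsplit, sum_sigma]
  exact sum_congr rfl fun I _ => by simp only [sum_const, smul_eq_mul, mul_comm]

theorem cNum_eq_cNum_sub {p m : ℕ} (hm : m ≤ p) : cNum p m = cNum p (p - m) := by
  rw [cNum_eq_sum, cNum_eq_sum]
  exact sum_congr rfl fun I hI => by
    rw [card_powerset_filter_add_card_eq_sub _ (card_uncovered hI) hm]

theorem cNum_le_cNum_succ {p m : ℕ} (hm : 2 * (m + 1) ≤ p) : cNum p m ≤ cNum p (m + 1) := by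
  rw [cNum_eq_sum, cNum_eq_sum]
  exact sum_le_sum fun I hI => Nat.mul_le_mul_left _ <|
    card_powerset_filter_add_card_le_succ _ (by rw [card_uncovered hI]; exact hm)

theorem cNum_symmetric_unimodal_general (p : ℕ) :
    (∀ m : ℕ, m ≤ p → cNum p m = cNum p (p - m)) ∧
    (∀ m : ℕ, 1 ≤ m → 2 * m ≤ p → cNum p (m - 1) ≤ cNum p m) ∧
    (∀ m : ℕ, p ≤ 2 * m → m + 1 ≤ p → cNum p (m + 1) ≤ cNum p m) := by
  refine ⟨fun m hm => cNum_eq_cNum_sub hm, fun m hm h2m => ?_, fun m hpm hmp => ?_⟩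
  · obtain ⟨n, rfl⟩ := Nat.exists_eq_add_of_le' hm
    exact cNum_le_cNum_succ h2m
  · rw [cNum_eq_cNum_sub hmp, cNum_eq_cNum_sub (m := m) (by omega),
      show p - m = p - (m + 1) + 1 by omega]
    exact cNum_le_cNum_succ (by omega)

/-- For a fixed integer `p > 0`, the sequence `(c_{p,m})_{0 ≤ m ≤ p}` is
symmetric and unimodal: `c_{p,m} = c_{p,p-m}` for `0 ≤ m ≤ p`; `c_{p,m-1} ≤ c_{p,m}`
whenever `1 ≤ m` and `2m ≤ p`; and (by symmetry) `c_{p,m} ≥ c_{p,m+1}` whenever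
`2m ≥ p` and `m + 1 ≤ p`. -/
theorem cNum_symmetric_unimodal (p : ℕ) (hp : 0 < p) :
    (∀ m : ℕ, m ≤ p → cNum p m = cNum p (p - m)) ∧
    (∀ m : ℕ, 1 ≤ m → 2 * m ≤ p → cNum p (m - 1) ≤ cNum p m) ∧
    (∀ m : ℕ, p ≤ 2 * m → m + 1 ≤ p → cNum p (m + 1) ≤ cNum p m) :=
  cNum_symmetric_unimodal_general p
end

section
/- Let k be an algebraically closed field with char k ≠ 2 and N = m+n ≥ 1. If g₁, g₂ ∈ Sp_{2N}(k) lie in the same double coset B(k) g K(k) inside GL_{2N}(k), then g₁ and g₂ lie in the same double coset B^φ(k) g K^φ(k) inside Sp_{2N}(k). Equivalently, the natural map from the set of double cosets B^φ(k)\Sp_{2N}(k)/K^φ(k) to the set of double cosets B(k)\GL_{2N}(k)/K(k) induced by the inclusion Sp_{2N}(k) ⊆ GL_{2N}(k) is injective. -/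
open Matrix

/-- The integer index of the `i`-th coordinate, where coordinates are indexed by
`I = {-N, …, -1, 1, …, N}` in increasing order. -/
def sympIdx (N : ℕ) (i : Fin (2 * N)) : ℤ :=
  if (i : ℕ) < N then (i : ℤ) - N else (i : ℤ) - N + 1

/-- The Gram matrix of the standard symplectic form `ω`: `ω(e_i, e_j) = 0` when `i + j ≠ 0`
and `ω(e_{-j}, e_j) = 1` for `j > 0`. -/
def sympForm (N : ℕ) (k : Type*) [Field k] : Matrix (Fin (2 * N)) (Fin (2 * N)) k :=
  fun i j => if sympIdx N i + sympIdx N j = 0 then (if sympIdx N i < 0 then 1 else -1) else 0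

/-- Membership in the symplectic group `Sp_{2N}(k)`: `g` preserves the form `ω`. -/
def InSp (N : ℕ) {k : Type*} [Field k] (g : GL (Fin (2 * N)) k) : Prop :=
  (g : Matrix (Fin (2 * N)) (Fin (2 * N)) k)ᵀ * sympForm N k *
    (g : Matrix (Fin (2 * N)) (Fin (2 * N)) k) = sympForm N k

/-- The diagonal involution `φ`, with entry `+1` at indices `i` with `1 ≤ |i| ≤ m` and
entry `-1` at indices with `m < |i| ≤ N`. -/
def phiMat (m N : ℕ) (k : Type*) [Field k] : Matrix (Fin (2 * N)) (Fin (2 * N)) k :=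
  Matrix.diagonal fun i => if |sympIdx N i| ≤ (m : ℤ) then 1 else -1

/-- A square matrix commutes with `φ`, i.e. lies in the centralizer `K(k)` of `φ`. -/
def CommutesWithPhi (m N : ℕ) {k : Type*} [Field k]
    (g : Matrix (Fin (2 * N)) (Fin (2 * N)) k) : Prop :=
  g * phiMat m N k = phiMat m N k * g


/-!
Let `θ g = J⁻¹ (gᵀ)⁻¹ J` be the involution of `GL_{2N}` whose fixed points form `Sp_{2N}`; it fixes
`φ`, hence preserves `K`, and it preserves `B`. If `g₂ = b g₁ h` with `b ∈ B`, `h ∈ K` and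
`g₁, g₂ ∈ Sp_{2N}`, then `a = θ(b)⁻¹ b` is upper triangular, `θ a = a⁻¹`, and
`g₁⁻¹ a g₁ = θ(h) h⁻¹ ∈ K`, i.e. `a` commutes with `g₁ φ g₁⁻¹`. As `k` is algebraically closed of
characteristic `≠ 2`, `a` has an inverse square root `s` that is a polynomial in `a`. Hence `s` is
upper triangular, `θ s = s⁻¹` and `s` commutes with `g₁ φ g₁⁻¹`, so `b' = b s` is symplectic and
`h' = g₁⁻¹ s⁻¹ g₁ h` lies in `K ∩ Sp_{2N}`, with `g₂ = b' g₁ h'`.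
-/

open Polynomial

theorem SemiconjBy.aeval {R A : Type*} [CommSemiring R] [Semiring A] [Algebra R A] {g x y : A}
    (h : SemiconjBy g x y) (q : R[X]) : SemiconjBy g (aeval x q) (aeval y q) := by
  induction q using Polynomial.induction_on' with
  | add p r hp hr => simpa only [map_add] using hp.add_right hr
  | monomial n c =>
    simpa only [aeval_monomial] using
      SemiconjBy.mul_right (Algebra.commute_algebraMap_right c g) (h.pow_right n)

theorem commute_conj_right_iff {G : Type*} [Group G] (g x y : G) :
    Commute y (g * x * g⁻¹) ↔ Commute (g⁻¹ * y * g) x := by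
  simpa only [mul_assoc, mul_inv_cancel_left, mul_inv_cancel, mul_one] using
    Commute.conj_iff g (a := g⁻¹ * y * g) (b := x)

namespace Polynomial

variable {k : Type*} [Field k] [IsAlgClosed k]

theorem dvd_pow_natDegree_of_forall_isRoot {χ f : k[X]} (hχ : χ ≠ 0)
    (hf : ∀ x, χ.IsRoot x → f.IsRoot x) : χ ∣ f ^ χ.natDegree := by
  have hcard : χ.roots.card = χ.natDegree := IsAlgClosed.card_roots_eq_natDegree
  conv_lhs => rw [← C_leadingCoeff_mul_prod_multiset_X_sub_C hcard]
  rw [← hcard, ← Multiset.prod_replicate, ← Multiset.map_const']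
  refine (C_mul_dvd (leadingCoeff_ne_zero.mpr hχ)).mpr (Multiset.prod_dvd_prod_of_dvd _ _ ?_)
  intro x hx
  exact dvd_iff_isRoot.mpr (hf x (isRoot_of_mem_roots hx))

theorem exists_dvd_X_mul_sq_sub_one (h2 : (2 : k) ≠ 0) {χ : k[X]} (hχ : ¬χ.IsRoot 0) :
    ∃ q : k[X], χ ∣ X * q ^ 2 - 1 := by
  classical
  have hχ0 : χ ≠ 0 := by rintro rfl; exact hχ (by simp)
  set π := Ideal.Quotient.mk (Ideal.span {χ})
  have hπ {f : k[X]} : π f = 0 ↔ χ ∣ f := by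
    rw [Ideal.Quotient.eq_zero_iff_mem, Ideal.mem_span_singleton]
  choose μ hμ using fun x : k => IsAlgClosed.exists_pow_nat_eq x two_pos
  -- `p` is an inverse square root of `X` at every root of `χ`, hence modulo the radical of `χ`;
  -- Newton's method then lifts it to an exact one modulo `χ`.
  set p := Lagrange.interpolate χ.roots.toFinset id fun x => (μ x)⁻¹
  have hp : IsNilpotent (π (X * p ^ 2 - 1)) := by
    refine ⟨χ.natDegree, ?_⟩
    rw [← map_pow, hπ]
    refine dvd_pow_natDegree_of_forall_isRoot hχ0 fun x hx => ?_
    have hpx : eval x p = (μ x)⁻¹ := Lagrange.eval_interpolate_at_node (v := id) _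
      (Set.injOn_id _) (Multiset.mem_toFinset.mpr ((mem_roots hχ0).mpr hx))
    have hx0 : x ≠ 0 := by rintro rfl; exact hχ hx
    simp only [IsRoot, eval_sub, eval_mul, eval_X, eval_pow, eval_one, hpx]
    rw [inv_pow, hμ x, mul_inv_cancel₀ hx0, sub_self]
  set P : (k[X] ⧸ Ideal.span {χ})[X] := C (π X) * X ^ 2 - 1
  have hP' : aeval (π p) (derivative P) = π X * (2 * π p) := by
    simp [P, one_add_one_eq_two]
  have hXp : IsUnit (π X * π p ^ 2) := by
    simpa using hp.isUnit_add_left_of_commute isUnit_one (Commute.all _ _)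
  have h2' : IsUnit (2 : k[X] ⧸ Ideal.span {χ}) := by
    simpa only [map_ofNat] using (IsUnit.mk0 _ h2).map (algebraMap k (k[X] ⧸ Ideal.span {χ}))
  have hP'_unit : IsUnit (aeval (π p) (derivative P)) := by
    rw [hP']
    exact (isUnit_of_mul_isUnit_left hXp).mul
      (h2'.mul ((isUnit_pow_iff two_ne_zero).mp (isUnit_of_mul_isUnit_right hXp)))
  obtain ⟨r, -, hr⟩ :=
    (existsUnique_nilpotent_sub_and_aeval_eq_zero (by simpa [P] using hp) hP'_unit).exists
  obtain ⟨q, rfl⟩ := Ideal.Quotient.mk_surjective r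
  exact ⟨q, hπ.mp (by simpa [P] using hr)⟩

end Polynomial

namespace Matrix

variable {n R : Type*} [Fintype n] [DecidableEq n]

theorem transpose_aeval [CommSemiring R] (A : Matrix n n R) (q : R[X]) :
    (aeval A q)ᵀ = aeval Aᵀ q := by
  apply MulOpposite.op_injective
  rw [← aeval_op_apply]
  exact (aeval_algHom_apply (transposeAlgEquiv n R R) A q).symm

theorem IsUpperTriangular.aeval [CommSemiring R] [LinearOrder n] {A : Matrix n n R}
    (hA : A.IsUpperTriangular) (q : R[X]) : (aeval A q).IsUpperTriangular :=
  Algebra.adjoin_le (s := {A}) (S := blockTriangularSubalgebra R R id)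
    (Set.singleton_subset_iff.mpr hA) (aeval_mem_adjoin_singleton R A)

theorem IsUpperTriangular.coe_units_inv [CommRing R] [LinearOrder n] {g : GL n R}
    (hg : (g : Matrix n n R).IsUpperTriangular) :
    ((g⁻¹ : GL n R) : Matrix n n R).IsUpperTriangular := by
  let := g.invertible
  rw [Matrix.coe_units_inv]
  exact blockTriangular_inv_of_blockTriangular hg

theorem exists_mul_aeval_sq_eq_one [Field R] [IsAlgClosed R] (h2 : (2 : R) ≠ 0)
    {A : Matrix n n R} (hA : IsUnit A) : ∃ q : R[X], A * aeval A q ^ 2 = 1 := by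
  have hroot : ¬A.charpoly.IsRoot 0 := by
    intro h
    apply ((isUnit_iff_isUnit_det A).mp hA).ne_zero
    rw [det_eq_sign_charpoly_coeff, coeff_zero_eq_eval_zero, h, mul_zero]
  obtain ⟨q, r, hr⟩ := exists_dvd_X_mul_sq_sub_one h2 hroot
  refine ⟨q, sub_eq_zero.mp ?_⟩
  simpa [aeval_self_charpoly] using congrArg (aeval A) hr

end Matrix

theorem isUpperTriangular_iff {d : ℕ} {R : Type*} [Field R] {M : Matrix (Fin d) (Fin d) R} :
    _root_.IsUpperTriangular M ↔ M.IsUpperTriangular :=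
  Iff.rfl

section Symplectic

variable {N : ℕ} {k : Type*} [Field k]

local notation "𝕄" => Matrix (Fin (2 * N)) (Fin (2 * N)) k

theorem sympIdx_rev (i : Fin (2 * N)) : sympIdx N i.rev = -sympIdx N i := by
  have := i.isLt
  simp only [sympIdx, Fin.val_rev]
  split_ifs <;> omega

theorem sympIdx_add_eq_zero_iff {i j : Fin (2 * N)} :
    sympIdx N i + sympIdx N j = 0 ↔ j = i.rev := by
  have := i.isLt
  have := j.isLt
  simp only [sympIdx, Fin.ext_iff, Fin.val_rev]
  split_ifs <;> omega

variable (N k) in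
def sympSign (i : Fin (2 * N)) : k := if sympIdx N i < 0 then 1 else -1

theorem sympSign_rev (i : Fin (2 * N)) : sympSign N k i.rev = -sympSign N k i := by
  have := i.isLt
  simp only [sympSign, sympIdx, Fin.val_rev]
  split_ifs <;> first | omega | simp

theorem sympSign_mul_self (i : Fin (2 * N)) : sympSign N k i * sympSign N k i = 1 := by
  simp only [sympSign]
  split_ifs <;> simp

theorem sympForm_apply (i j : Fin (2 * N)) :
    sympForm N k i j = if j = i.rev then sympSign N k i else 0 := by
  simp only [sympForm, sympSign, sympIdx_add_eq_zero_iff]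

theorem sympForm_mul_apply (M : 𝕄) (i j : Fin (2 * N)) :
    (sympForm N k * M) i j = sympSign N k i * M i.rev j := by
  simp [mul_apply, sympForm_apply, ite_mul]

theorem mul_sympForm_apply (M : 𝕄) (i j : Fin (2 * N)) :
    (M * sympForm N k) i j = M i j.rev * sympSign N k j.rev := by
  have (x : Fin (2 * N)) : j = x.rev ↔ x = j.rev := by rw [eq_comm, Fin.rev_eq_iff]
  simp [mul_apply, sympForm_apply, this]

theorem sympForm_transpose : (sympForm N k)ᵀ = -sympForm N k := by
  ext i j
  simp only [transpose_apply, Matrix.neg_apply, sympForm_apply, ← Fin.rev_eq_iff,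
    eq_comm (a := j.rev)]
  split_ifs with h
  · rw [← h, sympSign_rev]
  · rw [neg_zero]

theorem sympForm_mul_self : sympForm N k * sympForm N k = -1 := by
  ext i j
  rw [sympForm_mul_apply, sympForm_apply, Fin.rev_rev, sympSign_rev]
  rcases eq_or_ne j i with rfl | h
  · simp [sympSign_mul_self]
  · simp [h, h.symm]

theorem sympForm_mul_sympForm_mul (A : 𝕄) : sympForm N k * (sympForm N k * A) = -A := by
  rw [← Matrix.mul_assoc, sympForm_mul_self, Matrix.neg_mul, Matrix.one_mul]

theorem Matrix.IsUpperTriangular.sympForm_mul_transpose_mul_sympForm {M : 𝕄}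
    (hM : M.IsUpperTriangular) : (sympForm N k * Mᵀ * sympForm N k).IsUpperTriangular := by
  intro i j (hij : j < i)
  have h0 : M j.rev i.rev = 0 := hM (Fin.rev_lt_rev.mpr hij)
  rw [mul_sympForm_apply, sympForm_mul_apply, transpose_apply, h0, mul_zero, zero_mul]

theorem phiMat_mul_self (m : ℕ) : phiMat m N k * phiMat m N k = 1 := by
  rw [phiMat, diagonal_mul_diagonal, ← diagonal_one]
  congr 1
  funext i
  split_ifs <;> simp

theorem phiMat_transpose_mul_sympForm_mul_phiMat (m : ℕ) :
    (phiMat m N k)ᵀ * sympForm N k * phiMat m N k = sympForm N k := by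
  ext i j
  simp only [phiMat, diagonal_transpose, mul_diagonal, diagonal_mul, sympForm_apply]
  rcases eq_or_ne j i.rev with rfl | h
  · rw [sympIdx_rev, abs_neg]
    split_ifs <;> simp
  · simp [h]

theorem transpose_mul_transpose_inv_mul (g : GL (Fin (2 * N)) k) (A : 𝕄) :
    (g : 𝕄)ᵀ * ((↑g⁻¹ : 𝕄)ᵀ * A) = A := by
  rw [← Matrix.mul_assoc, ← transpose_mul, Units.inv_mul, transpose_one, Matrix.one_mul]

theorem transpose_inv_mul_transpose_mul (g : GL (Fin (2 * N)) k) (A : 𝕄) :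
    (↑g⁻¹ : 𝕄)ᵀ * ((g : 𝕄)ᵀ * A) = A := by
  rw [← Matrix.mul_assoc, ← transpose_mul, Units.mul_inv, transpose_one, Matrix.one_mul]

variable (N k) in
/-- With `J = sympForm N k`, so that `J⁻¹ = -J`, this is `g ↦ J⁻¹ (gᵀ)⁻¹ J`. -/
def sympInvolution : GL (Fin (2 * N)) k →* GL (Fin (2 * N)) k where
  toFun g := ⟨-(sympForm N k * (↑g⁻¹ : 𝕄)ᵀ * sympForm N k),
    -(sympForm N k * (g : 𝕄)ᵀ * sympForm N k),
    by simp only [neg_mul_neg, Matrix.mul_assoc, sympForm_mul_sympForm_mul, Matrix.mul_neg,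
      transpose_inv_mul_transpose_mul, neg_neg, sympForm_mul_self],
    by simp only [neg_mul_neg, Matrix.mul_assoc, sympForm_mul_sympForm_mul, Matrix.mul_neg,
      transpose_mul_transpose_inv_mul, neg_neg, sympForm_mul_self]⟩
  map_one' := Units.ext (by simp [sympForm_mul_self])
  map_mul' g h := Units.ext (by
    simp only [_root_.mul_inv_rev, Units.val_mul, transpose_mul, neg_mul_neg, Matrix.mul_assoc,
      sympForm_mul_sympForm_mul, Matrix.mul_neg])

theorem coe_sympInvolution (g : GL (Fin (2 * N)) k) :
    (sympInvolution N k g : 𝕄) = -(sympForm N k * (↑g⁻¹ : 𝕄)ᵀ * sympForm N k) :=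
  rfl

theorem sympInvolution_eq_iff {g g' : GL (Fin (2 * N)) k} :
    sympInvolution N k g = g' ↔ (g : 𝕄)ᵀ * sympForm N k * (g' : 𝕄) = sympForm N k := by
  rw [Units.ext_iff, coe_sympInvolution, Matrix.mul_assoc]
  constructor
  · intro h
    rw [← h]
    simp only [Matrix.mul_neg, Matrix.mul_assoc, sympForm_mul_sympForm_mul, neg_neg,
      transpose_mul_transpose_inv_mul]
  · intro h
    have h' : (↑g⁻¹ : 𝕄)ᵀ * sympForm N k = sympForm N k * g' := by
      conv_lhs => rw [← h]
      rw [Matrix.mul_assoc, transpose_inv_mul_transpose_mul]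
    rw [h', sympForm_mul_sympForm_mul, neg_neg]

theorem sympInvolution_eq_self_iff {g : GL (Fin (2 * N)) k} :
    sympInvolution N k g = g ↔ InSp N g :=
  sympInvolution_eq_iff

theorem sympInvolution_eq_inv_iff {g : GL (Fin (2 * N)) k} :
    sympInvolution N k g = g⁻¹ ↔ sympForm N k * (g : 𝕄) = (g : 𝕄)ᵀ * sympForm N k := by
  rw [sympInvolution_eq_iff]
  constructor
  · intro h
    conv_lhs => rw [← h]
    rw [Matrix.mul_assoc, Units.inv_mul, Matrix.mul_one]
  · intro h
    rw [← h, Matrix.mul_assoc, Units.mul_inv, Matrix.mul_one]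

theorem sympInvolution_sympInvolution (g : GL (Fin (2 * N)) k) :
    sympInvolution N k (sympInvolution N k g) = g := by
  rw [sympInvolution_eq_iff, coe_sympInvolution]
  simp only [transpose_neg, transpose_mul, transpose_transpose, sympForm_transpose,
    Matrix.neg_mul, Matrix.mul_neg, neg_neg, Matrix.mul_assoc, sympForm_mul_sympForm_mul,
    Units.inv_mul, Matrix.mul_one]

theorem Matrix.IsUpperTriangular.coe_sympInvolution {g : GL (Fin (2 * N)) k}
    (hg : (g : 𝕄).IsUpperTriangular) : (sympInvolution N k g : 𝕄).IsUpperTriangular :=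
  hg.coe_units_inv.sympForm_mul_transpose_mul_sympForm.neg

def phiUnit (m N : ℕ) (k : Type*) [Field k] : GL (Fin (2 * N)) k :=
  ⟨phiMat m N k, phiMat m N k, phiMat_mul_self m, phiMat_mul_self m⟩

theorem commutesWithPhi_iff {m : ℕ} {g : GL (Fin (2 * N)) k} :
    CommutesWithPhi m N (g : 𝕄) ↔ Commute g (phiUnit m N k) :=
  ⟨fun h => Units.ext h, congrArg Units.val⟩

theorem sympInvolution_phiUnit (m : ℕ) : sympInvolution N k (phiUnit m N k) = phiUnit m N k :=
  sympInvolution_eq_self_iff.mpr (phiMat_transpose_mul_sympForm_mul_phiMat m)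

theorem exists_mul_sq_eq_one_of_sympInvolution_eq_inv [IsAlgClosed k] (h2 : (2 : k) ≠ 0)
    {a : GL (Fin (2 * N)) k} (ha : sympInvolution N k a = a⁻¹) (ha_up : (a : 𝕄).IsUpperTriangular) :
    ∃ s : GL (Fin (2 * N)) k, (s : 𝕄).IsUpperTriangular ∧ sympInvolution N k s = s⁻¹ ∧
      a * s ^ 2 = 1 ∧ ∀ x, Commute x a → Commute x s := by
  obtain ⟨q, hq⟩ := exists_mul_aeval_sq_eq_one h2 a.isUnit
  set s := aeval (a : 𝕄) q
  have hsa : Commute s a := ((Commute.refl _).aeval q).symm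
  let S : GL (Fin (2 * N)) k :=
    ⟨s, a * s, by rw [← Matrix.mul_assoc, hsa.eq, Matrix.mul_assoc, ← sq, hq],
      by rw [Matrix.mul_assoc, ← sq, hq]⟩
  refine ⟨S, ha_up.aeval q, ?_, Units.ext hq, fun x hx => Units.ext ?_⟩
  · rw [sympInvolution_eq_inv_iff] at ha ⊢
    have := SemiconjBy.aeval ha q
    rwa [← transpose_aeval] at this
  · exact SemiconjBy.aeval (congrArg Units.val hx) q

end Symplectic

theorem Sp_double_cosets_inject_into_GL_double_cosets_general
    (k : Type*) [Field k] [IsAlgClosed k] (hchar : ringChar k ≠ 2)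
    (m n : ℕ)
    (g₁ g₂ : GL (Fin (2 * (m + n))) k) (hg₁ : InSp (m + n) g₁) (hg₂ : InSp (m + n) g₂)
    (hGL : ∃ b h : GL (Fin (2 * (m + n))) k,
      _root_.IsUpperTriangular (b : Matrix (Fin (2 * (m + n))) (Fin (2 * (m + n))) k) ∧
      CommutesWithPhi m (m + n) (h : Matrix (Fin (2 * (m + n))) (Fin (2 * (m + n))) k) ∧
      g₂ = b * g₁ * h) :
    ∃ b h : GL (Fin (2 * (m + n))) k, InSp (m + n) b ∧ InSp (m + n) h ∧
      _root_.IsUpperTriangular (b : Matrix (Fin (2 * (m + n))) (Fin (2 * (m + n))) k) ∧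
      CommutesWithPhi m (m + n) (h : Matrix (Fin (2 * (m + n))) (Fin (2 * (m + n))) k) ∧
      g₂ = b * g₁ * h := by
  obtain ⟨b, h, hb, hh, rfl⟩ := hGL
  rw [isUpperTriangular_iff] at hb
  rw [commutesWithPhi_iff] at hh
  rw [← sympInvolution_eq_self_iff] at hg₁ hg₂
  set θ := sympInvolution (m + n) k
  set φ := phiUnit m (m + n) k
  set a := (θ b)⁻¹ * b with ha
  have hθa : θ a = a⁻¹ := by
    rw [ha, map_mul, map_inv, sympInvolution_sympInvolution]; group
  have hθh : θ h = g₁⁻¹ * a * g₁ * h := by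
    conv_lhs => rw [show h = (b * g₁)⁻¹ * (b * g₁ * h) by group]
    rw [map_mul, map_inv, map_mul, hg₁, hg₂, ha]; group
  have hθh_comm : Commute (θ h) φ := by simpa only [θ, φ, sympInvolution_phiUnit] using hh.map θ
  have hax : Commute a (g₁ * φ * g₁⁻¹) := by
    rw [commute_conj_right_iff, show g₁⁻¹ * a * g₁ = θ h * h⁻¹ by rw [hθh]; group]
    exact hθh_comm.mul_left hh.inv_left
  obtain ⟨s, hs_up, hθs, has, hs_comm⟩ := exists_mul_sq_eq_one_of_sympInvolution_eq_inv
    (Ring.two_ne_zero hchar) hθa (hb.coe_sympInvolution.coe_units_inv.mul hb)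
  have hθbs : θ (b * s) = b * s := by
    rw [ha, mul_assoc, inv_mul_eq_one] at has
    rw [map_mul, hθs, has]; group
  refine ⟨b * s, g₁⁻¹ * s⁻¹ * g₁ * h, sympInvolution_eq_self_iff.mp hθbs, ?_,
    isUpperTriangular_iff.mpr (hb.mul hs_up), commutesWithPhi_iff.mpr ?_, by group⟩
  · rw [← sympInvolution_eq_self_iff,
      show g₁⁻¹ * s⁻¹ * g₁ * h = (b * s * g₁)⁻¹ * (b * g₁ * h) by group,
      map_mul, map_inv, map_mul, hθbs, hg₁, hg₂]
  · exact ((commute_conj_right_iff _ _ _).mp (hs_comm _ hax.symm).inv_right.symm).mul_left hh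

/-- Let `k` be algebraically closed of characteristic `≠ 2`, `N = m+n ≥ 1`.
If `g₁, g₂ ∈ Sp_{2N}(k)` lie in the same double coset `B(k) g K(k)` inside `GL_{2N}(k)`
(`B(k)` the upper triangular invertible matrices, `K(k)` the centralizer of `φ` in the
general linear group), then they lie in the same double coset `B^φ(k) g K^φ(k)` inside
`Sp_{2N}(k)`; i.e. the natural map of double coset sets induced by `Sp_{2N} ⊆ GL_{2N}`
is injective. -/
theorem Sp_double_cosets_inject_into_GL_double_cosets
    (k : Type*) [Field k] [IsAlgClosed k] (hchar : ringChar k ≠ 2)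
    (m n : ℕ) (hmn : 1 ≤ m + n)
    (g₁ g₂ : GL (Fin (2 * (m + n))) k) (hg₁ : InSp (m + n) g₁) (hg₂ : InSp (m + n) g₂)
    (hGL : ∃ b h : GL (Fin (2 * (m + n))) k,
      _root_.IsUpperTriangular (b : Matrix (Fin (2 * (m + n))) (Fin (2 * (m + n))) k) ∧
      CommutesWithPhi m (m + n) (h : Matrix (Fin (2 * (m + n))) (Fin (2 * (m + n))) k) ∧
      g₂ = b * g₁ * h) :
    ∃ b h : GL (Fin (2 * (m + n))) k, InSp (m + n) b ∧ InSp (m + n) h ∧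
      _root_.IsUpperTriangular (b : Matrix (Fin (2 * (m + n))) (Fin (2 * (m + n))) k) ∧
      CommutesWithPhi m (m + n) (h : Matrix (Fin (2 * (m + n))) (Fin (2 * (m + n))) k) ∧
      g₂ = b * g₁ * h :=
  Sp_double_cosets_inject_into_GL_double_cosets_general k hchar m n g₁ g₂ hg₁ hg₂ hGL
end

section
/- Let k be an algebraically closed field with char k ≠ 2. Let I be a finite set equipped with a fixed-point-free involution σ : I → I, and let w : I → I be a bijection with w ∘ w = id and w ∘ σ = σ ∘ w. Let t : I → kˣ and define s : I → kˣ by s(i) = t(i)·t(w(i))^{−1}. If s satisfies s(σ(i)) = s(i)^{−1} for all i ∈ I, then there exists t' : I → kˣ with t'(σ(i)) = t'(i)^{−1} for all i ∈ I and t'(i)·t'(w(i))^{−1} = s(i) for all i ∈ I. -/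
/-- Let `k` be an algebraically closed field with `char k ≠ 2`. Let `I` be
a finite set with a fixed-point-free involution `σ : I → I`, and let `w : I → I` be a
bijection with `w ∘ w = id` and `w ∘ σ = σ ∘ w`. Let `t : I → kˣ` and define `s : I → kˣ`
by `s i = t i · (t (w i))⁻¹`. If `s (σ i) = (s i)⁻¹` for all `i`, then there exists
`t' : I → kˣ` with `t' (σ i) = (t' i)⁻¹` for all `i` and `t' i · (t' (w i))⁻¹ = s i`
for all `i`. -/
theorem torus_descent_for_symplectic_involution
    (k : Type*) [Field k] [IsAlgClosed k] (hchar : ringChar k ≠ 2)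
    (I : Type*) [Finite I]
    (σ : I → I) (hσ : σ ∘ σ = id) (hσfree : ∀ i, σ i ≠ i)
    (w : I → I) (hwbij : Function.Bijective w) (hw : w ∘ w = id) (hcomm : w ∘ σ = σ ∘ w)
    (t : I → kˣ) (s : I → kˣ) (hs : ∀ i, s i = t i * (t (w i))⁻¹)
    (hsσ : ∀ i, s (σ i) = (s i)⁻¹) :
    ∃ t' : I → kˣ,
      (∀ i, t' (σ i) = (t' i)⁻¹) ∧ (∀ i, t' i * (t' (w i))⁻¹ = s i) := by
  -- Choose a square-root function on `kˣ`.
  have hsq : ∀ x : kˣ, ∃ y : kˣ, y * y = x := by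
    intro x
    obtain ⟨z, hz⟩ := IsAlgClosed.exists_pow_nat_eq (x : k) (n := 2) (by norm_num)
    have hz0 : z ≠ 0 := by
      intro h
      apply x.ne_zero
      rw [← hz, h]; ring
    refine ⟨Units.mk0 z hz0, ?_⟩
    ext
    rw [Units.val_mul, Units.val_mk0, ← hz]; ring
  choose sq hsq using hsq
  have hσσ : ∀ i, σ (σ i) = i := fun i => congrFun hσ i
  have hwσ : ∀ i, w (σ i) = σ (w i) := fun i => congrFun hcomm i
  set u : I → kˣ := fun i => t i * t (σ i) with hu
  have huσ : ∀ i, u (σ i) = u i := by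
    intro i
    simp only [hu, hσσ]
    exact mul_comm _ _
  have huw : ∀ i, u (w i) = u i := by
    intro i
    have h := hsσ i
    rw [hs, hs, hwσ] at h
    have h' := congrArg (Units.val) h
    push_cast at h'
    field_simp at h'
    refine Units.ext ?_
    simp only [hu]
    push_cast
    linear_combination -h'
  refine ⟨fun i => t i * sq (u i)⁻¹, ?_, ?_⟩
  · intro i
    show t (σ i) * sq (u (σ i))⁻¹ = (t i * sq (u i)⁻¹)⁻¹
    rw [huσ, eq_inv_iff_mul_eq_one]
    refine Units.ext ?_
    have h2 := congrArg Units.val (hsq (u i)⁻¹)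
    simp only [hu] at h2 ⊢
    push_cast at h2 ⊢
    field_simp at h2 ⊢
    linear_combination h2
  · intro i
    show t i * sq (u i)⁻¹ * (t (w i) * sq (u (w i))⁻¹)⁻¹ = s i
    rw [hs, huw]
    refine Units.ext ?_
    push_cast
    field_simp
end
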